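/- arXiv:1612.01379 — 6 statements merged into one kernel-verified Lean document; each statement's English description precedes it below -/
import Mathlib

section
/- Let V be a finite set of points p : V → ℝ^d whose affine span is all of ℝ^d, let Γ be a finitely generated subgroup of ℝ^d (thought of as a group of translations), and let q : V → ℝ^d. Suppose that for all u, v ∈ V and all γ ∈ Γ, ‖p(v) − (p(u) + γ)‖ = ‖q(v) − (q(u) + γ)‖. Then there exists an isometry h of ℝ^d such that q = h ∘ p and h(x) − h(0) = x for every x ∈ Γ (i.e., the linear part of h fixes every element of Γ). -/
/-!
Fix a vertex `u₀` and put `a v = p v - p u₀`, `b v = q v - q u₀`. The labels `γ = 0` make the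
Gram matrices of `a` and `b` equal, and since the `a v` span `ℝ^d`, `∑ cᵥ a v ↦ ∑ cᵥ b v` is a
well-defined linear isometry `T`; then `h x = T (x - p u₀) + q u₀`. For `γ ∈ Γ`, polarization turns
the distance data into `⟪a v, γ⟫ = ⟪b v, γ⟫ = ⟪T (a v), γ⟫`, so `T⁻¹ γ - γ` is orthogonal to the
spanning family `a` and `T` fixes `γ`.
-/

open scoped InnerProductSpace RealInnerProductSpace

section InnerProductFamily

variable {𝕜 E F ι : Type*} [RCLike 𝕜] [NormedAddCommGroup E] [InnerProductSpace 𝕜 E]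
  [NormedAddCommGroup F] [InnerProductSpace 𝕜 F] {a : ι → E} {b : ι → F}

theorem inner_linearCombination_eq_of_inner_eq (h : ∀ i j, ⟪a i, a j⟫_𝕜 = ⟪b i, b j⟫_𝕜)
    (c c' : ι →₀ 𝕜) :
    ⟪Finsupp.linearCombination 𝕜 b c, Finsupp.linearCombination 𝕜 b c'⟫_𝕜 =
      ⟪Finsupp.linearCombination 𝕜 a c, Finsupp.linearCombination 𝕜 a c'⟫_𝕜 := by
  simp only [Finsupp.linearCombination_apply, Finsupp.sum, sum_inner, inner_sum, inner_smul_left,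
    inner_smul_right, h]

theorem exists_linearIsometry_apply_eq_of_inner_eq (hspan : Submodule.span 𝕜 (Set.range a) = ⊤)
    (h : ∀ i j, ⟪a i, a j⟫_𝕜 = ⟪b i, b j⟫_𝕜) : ∃ T : E →ₗᵢ[𝕜] F, ∀ i, T (a i) = b i := by
  have hAB := inner_linearCombination_eq_of_inner_eq h
  set A := Finsupp.linearCombination 𝕜 a
  set B := Finsupp.linearCombination 𝕜 b
  obtain ⟨S, hS⟩ := A.exists_rightInverse_of_surjective (by rwa [Finsupp.range_linearCombination])
  have hAS (x : E) : A (S x) = x := LinearMap.congr_fun hS x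
  refine ⟨(B ∘ₗ S).isometryOfInner fun x y => by simp only [LinearMap.comp_apply, hAB, hAS],
    fun i => ?_⟩
  have hA : A (S (a i) - Finsupp.single i 1) = 0 := by simp [A, hAS]
  have hB : B (S (a i) - Finsupp.single i 1) = 0 := by
    rw [← inner_self_eq_zero (𝕜 := 𝕜), hAB, hA, inner_zero_left]
  simpa [B, sub_eq_zero] using hB

theorem eq_of_forall_inner_eq_of_span_eq_top (hspan : Submodule.span 𝕜 (Set.range a) = ⊤)
    {x y : E} (h : ∀ i, ⟪a i, x⟫_𝕜 = ⟪a i, y⟫_𝕜) : x = y :=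
  ext_inner_left 𝕜 fun z => by
    have := LinearMap.ext_on_range hspan (f := (innerₛₗ 𝕜).flip x) (g := (innerₛₗ 𝕜).flip y) h
    exact LinearMap.congr_fun this z

theorem LinearIsometryEquiv.apply_eq_self_of_inner_eq (T : E ≃ₗᵢ[𝕜] E)
    (hspan : Submodule.span 𝕜 (Set.range a) = ⊤) {x : E} (h : ∀ i, ⟪T (a i), x⟫_𝕜 = ⟪a i, x⟫_𝕜) :
    T x = x := by
  have : T.symm x = x := eq_of_forall_inner_eq_of_span_eq_top hspan fun i => by
    rw [← h i, ← T.inner_map_map, T.apply_symm_apply]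
  rw [← this, T.apply_symm_apply, this]

end InnerProductFamily

theorem real_inner_eq_of_norm_eq {E : Type*} [NormedAddCommGroup E] [InnerProductSpace ℝ E]
    {x y x' y' : E} (hx : ‖x‖ = ‖x'‖) (hy : ‖y‖ = ‖y'‖) (hxy : ‖x - y‖ = ‖x' - y'‖) :
    ⟪x, y⟫ = ⟪x', y'⟫ := by
  rw [real_inner_eq_norm_mul_self_add_norm_mul_self_sub_norm_sub_mul_self_div_two,
    real_inner_eq_norm_mul_self_add_norm_mul_self_sub_norm_sub_mul_self_div_two, hx, hy, hxy]

section AffineSpan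

variable {k V ι : Type*} [Ring k] [AddCommGroup V] [Module k V]

theorem nonempty_of_affineSpan_range_eq_top {P : Type*} [AddTorsor V P] {p : ι → P}
    (h : affineSpan k (Set.range p) = ⊤) : Nonempty ι := by
  obtain ⟨x⟩ := AddTorsor.nonempty (G := V) (P := P)
  have hx : x ∈ affineSpan k (Set.range p) := h ▸ AffineSubspace.mem_top k V x
  exact Set.range_nonempty_iff_nonempty.1 <| (affineSpan_nonempty k).1 ⟨x, hx⟩

theorem span_range_sub_eq_top_of_affineSpan_eq_top {p : ι → V}
    (h : affineSpan k (Set.range p) = ⊤) (i₀ : ι) :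
    Submodule.span k (Set.range fun i => p i - p i₀) = ⊤ := by
  rw [← AffineSubspace.direction_top k V V, ← h, direction_affineSpan,
    vectorSpan_range_eq_span_range_vsub_right k p i₀]
  rfl

end AffineSpan

theorem periodic_congruence_of_equal_labeled_distances_general
    {d : ℕ} {V : Type*}
    (p q : V → EuclideanSpace ℝ (Fin d))
    (Γ : AddSubgroup (EuclideanSpace ℝ (Fin d)))
    (hspan : affineSpan ℝ (Set.range p) = ⊤)
    (hdist : ∀ u v : V, ∀ γ ∈ Γ, ‖p v - (p u + γ)‖ = ‖q v - (q u + γ)‖) :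
    ∃ h : EuclideanSpace ℝ (Fin d) ≃ᵢ EuclideanSpace ℝ (Fin d),
      (∀ v, q v = h (p v)) ∧ ∀ x ∈ Γ, h x - h 0 = x := by
  obtain ⟨u₀⟩ := nonempty_of_affineSpan_range_eq_top hspan
  set a := fun v => p v - p u₀
  set b := fun v => q v - q u₀
  have ha : Submodule.span ℝ (Set.range a) = ⊤ :=
    span_range_sub_eq_top_of_affineSpan_eq_top hspan u₀
  have hnorm (v : V) (γ : EuclideanSpace ℝ (Fin d)) (hγ : γ ∈ Γ) : ‖a v - γ‖ = ‖b v - γ‖ := by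
    simpa only [a, b, sub_sub] using hdist u₀ v γ hγ
  have hnorm₀ (v : V) : ‖a v‖ = ‖b v‖ := by simpa using hnorm v 0 Γ.zero_mem
  have hgram (u v : V) : ⟪a u, a v⟫ = ⟪b u, b v⟫ :=
    real_inner_eq_of_norm_eq (hnorm₀ u) (hnorm₀ v) (by simpa [a, b] using hdist v u 0 Γ.zero_mem)
  obtain ⟨T, hT⟩ := exists_linearIsometry_apply_eq_of_inner_eq ha hgram
  set T' := T.toLinearIsometryEquiv rfl
  refine ⟨(IsometryEquiv.subRight (p u₀)).trans
    (T'.toIsometryEquiv.trans (IsometryEquiv.addRight (q u₀))), fun v => ?_, fun γ hγ => ?_⟩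
  · simp only [IsometryEquiv.trans_apply, IsometryEquiv.subRight_apply,
      LinearIsometryEquiv.coe_toIsometryEquiv, IsometryEquiv.addRight_apply, T',
      LinearIsometry.coe_toLinearIsometryEquiv]
    rw [hT v, sub_add_cancel]
  · have hfix : T' γ = γ := T'.apply_eq_self_of_inner_eq ha fun v => by
      rw [T.coe_toLinearIsometryEquiv, hT v]
      exact (real_inner_eq_of_norm_eq (hnorm₀ v) rfl (hnorm v γ hγ)).symm
    simp [hfix]

/-- Proposition: necessity direction.
If the complete `Γ`-labeled distance data of `p` and `q` agree, where `p` affinely spans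
`ℝ^d` and `Γ` is a finitely generated group of translations of `ℝ^d`, then `q = h ∘ p`
for some `L(Γ)`-invariant isometry `h` of `ℝ^d`. -/
theorem periodic_congruence_of_equal_labeled_distances
    {d : ℕ} {V : Type*} [Finite V]
    (p q : V → EuclideanSpace ℝ (Fin d))
    (Γ : AddSubgroup (EuclideanSpace ℝ (Fin d))) (hΓ : Γ.FG)
    (hspan : affineSpan ℝ (Set.range p) = ⊤)
    (hdist : ∀ u v : V, ∀ γ ∈ Γ, ‖p v - (p u + γ)‖ = ‖q v - (q u + γ)‖) :
    ∃ h : EuclideanSpace ℝ (Fin d) ≃ᵢ EuclideanSpace ℝ (Fin d),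
      (∀ v, q v = h (p v)) ∧ ∀ x ∈ Γ, h x - h 0 = x :=
  periodic_congruence_of_equal_labeled_distances_general p q Γ hspan hdist
end

section
/- Let f : ℝ^d → ℝ^k be a polynomial map with rational coefficients and let p ∈ ℝ^d be a point whose coordinates are algebraically independent over ℚ. If the Jacobian matrix df|_p has linearly independent rows (rank k), then the coordinates of f(p) are algebraically independent over ℚ. -/
/-!
If `Q(f(p)) = 0`, then `Q ∘ f` vanishes at the generic point `p`, so `Q ∘ f = 0` identically.
Differentiating, the chain rule gives `∑ᵢ (∂ᵢQ)(f(p)) · ∂ⱼfᵢ(p) = 0` for every `j`, and independence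
of the rows of the Jacobian forces `(∂ᵢQ)(f(p)) = 0`. Thus the polynomials vanishing at `f(p)` form
a set closed under partial derivatives; in characteristic zero such a set contains no nonzero
polynomial, as one sees by induction on the total degree.
-/

open MvPolynomial

theorem Derivation.map_aeval_eq_sum_pderiv {R A M σ : Type*} [CommSemiring R] [CommSemiring A]
    [Algebra R A] [AddCommMonoid M] [Module A M] [Module R M] [IsScalarTower R A M] [Fintype σ]
    (D : Derivation R A M) (x : σ → A) (Q : MvPolynomial σ R) :
    D (aeval x Q) = ∑ i, aeval x (pderiv i Q) • D (x i) := by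
  classical
  induction Q using MvPolynomial.induction_on with
  | C a => simp
  | add Q₁ Q₂ h₁ h₂ => simp [h₁, h₂, add_smul, Finset.sum_add_distrib]
  | mul_X Q j hQ =>
    simp [Derivation.leibniz, pderiv_X, Pi.single_apply, apply_ite, hQ, add_smul, mul_smul,
      Finset.sum_add_distrib, Finset.smul_sum]

namespace MvPolynomial

variable {R σ : Type*}

theorem totalDegree_pderiv_lt [CommSemiring R] {Q : MvPolynomial σ R} {i : σ}
    (h : pderiv i Q ≠ 0) : (pderiv i Q).totalDegree < Q.totalDegree := by
  obtain ⟨m, hm, hdeg⟩ := Finset.exists_mem_eq_sup _ (support_nonempty.2 h)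
    fun s => s.sum fun _ e => e
  have hm' : m + Finsupp.single i 1 ∈ Q.support := by
    rw [mem_support_iff, coeff_pderiv] at hm
    exact mem_support_iff.2 (left_ne_zero_of_mul hm)
  calc (pderiv i Q).totalDegree = m.sum fun _ e => e := hdeg
    _ < (m + Finsupp.single i 1).sum fun _ e => e := by
      rw [Finsupp.sum_add_index' (fun _ => rfl) fun _ _ _ => rfl, Finsupp.sum_single_index rfl]
      exact Nat.lt_succ_self _
    _ ≤ Q.totalDegree := le_totalDegree hm'

theorem eq_C_of_forall_pderiv_eq_zero [CommRing R] [IsAddTorsionFree R] {Q : MvPolynomial σ R}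
    (h : ∀ i, pderiv i Q = 0) : Q = C (constantCoeff Q) := by
  rw [← coe_inj]
  refine MvPowerSeries.pderiv.ext (fun i => ?_) ?_
  · rw [MvPowerSeries.pderiv_coe, MvPowerSeries.pderiv_coe, h, pderiv_C]
  · rw [← MvPowerSeries.coeff_zero_eq_constantCoeff_apply, coeff_coe]
    simp [constantCoeff_eq]

end MvPolynomial

theorem algebraicIndependent_of_aeval_pderiv_eq_zero {R A σ : Type*} [CommRing R]
    [IsAddTorsionFree R] [CommRing A] [Algebra R A] [FaithfulSMul R A] (v : σ → A)
    (h : ∀ Q : MvPolynomial σ R, aeval v Q = 0 → ∀ i, aeval v (pderiv i Q) = 0) :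
    AlgebraicIndependent R v := by
  refine algebraicIndependent_iff.2 fun Q => ?_
  induction hn : Q.totalDegree using Nat.strong_induction_on generalizing Q with
  | _ n ih =>
    intro hQ
    have hpderiv : ∀ i, pderiv i Q = 0 := fun i => by
      by_contra hne
      exact hne (ih _ (hn ▸ totalDegree_pderiv_lt hne) _ rfl (h Q hQ i))
    have hC := eq_C_of_forall_pderiv_eq_zero hpderiv
    rw [hC, aeval_C, FaithfulSMul.algebraMap_eq_zero_iff] at hQ
    rw [hC, hQ, C_0]

/-- If `f : ℝ^d → ℝ^k` is a polynomial map with rational coefficients,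
`p` is generic (coordinates algebraically independent over `ℚ`), and the Jacobian of `f`
at `p` has linearly independent rows, then the coordinates of `f(p)` are algebraically
independent over `ℚ`. -/
theorem algebraicIndependent_image_of_jacobian_rows_independent
    {d k : ℕ} (P : Fin k → MvPolynomial (Fin d) ℚ)
    (p : Fin d → ℝ) (hp : AlgebraicIndependent ℚ p)
    (hJ : LinearIndependent ℝ (fun i : Fin k => fun j : Fin d =>
      MvPolynomial.aeval p (MvPolynomial.pderiv j (P i)))) :
    AlgebraicIndependent ℚ (fun i : Fin k => MvPolynomial.aeval p (P i)) := by
  refine algebraicIndependent_of_aeval_pderiv_eq_zero _ fun Q hQ => ?_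
  have hQP : aeval P Q = 0 :=
    algebraicIndependent_iff.1 hp _ (by rwa [comp_aeval_apply])
  have hchain : ∀ j, ∑ i, aeval (fun i => aeval p (P i)) (pderiv i Q) *
      aeval p (pderiv j (P i)) = 0 := fun j => by
    have := congrArg (aeval p) ((pderiv j).map_aeval_eq_sum_pderiv P Q)
    rw [hQP, map_zero, map_zero, map_sum] at this
    simpa only [smul_eq_mul, map_mul, comp_aeval_apply] using this.symm
  exact Fintype.linearIndependent_iff.1 hJ _ (funext fun j => by simpa using hchain j)
end

section
/- Let f : ℝ^d → ℝ^k be a polynomial map with rational coefficients and let p ∈ ℝ^d be a point whose coordinates are algebraically independent over ℚ. Then f(p) is a regular value of f; that is, for every y ∈ ℝ^d with f(y) = f(p), the Jacobian df|_y has maximal rank (equal to the maximum over all points of the rank of the Jacobian). -/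
open MvPolynomial

noncomputable section
namespace GenericRegAux
set_option linter.unusedSectionVars false

variable {σ : Type*}

lemma coeff_pderiv (i : σ) (m : σ →₀ ℕ) (f : MvPolynomial σ ℚ) :
    MvPolynomial.coeff m (pderiv i f)
      = ((m i : ℚ) + 1) * MvPolynomial.coeff (m + Finsupp.single i 1) f := by
  classical
  induction f using MvPolynomial.induction_on' with
  | monomial s a =>
    rw [pderiv_monomial, MvPolynomial.coeff_monomial, MvPolynomial.coeff_monomial]
    by_cases hs : s = m + Finsupp.single i 1
    · subst hs
      rw [if_pos (by simp), if_pos rfl]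
      simp only [Finsupp.add_apply, Finsupp.single_eq_same]
      push_cast
      ring
    · rw [if_neg hs]
      by_cases h2 : s - Finsupp.single i 1 = m
      · rw [if_pos h2]
        have hsi : s i = 0 := by
          by_contra hne
          apply hs
          have hle : Finsupp.single i 1 ≤ s := Finsupp.single_le_iff.2 (Nat.one_le_iff_ne_zero.2 hne)
          rw [← h2, tsub_add_cancel_of_le hle]
        simp [hsi]
      · rw [if_neg h2, mul_zero]
  | add p q hp hq =>
    simp only [map_add, MvPolynomial.coeff_add, hp, hq]
    ring

lemma eq_C_of_pderiv_eq_zero {G : MvPolynomial σ ℚ} (h : ∀ i, pderiv i G = 0) :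
    G = MvPolynomial.C (MvPolynomial.coeff 0 G) := by
  classical
  apply MvPolynomial.ext
  intro m
  rw [MvPolynomial.coeff_C]
  by_cases hm : 0 = m
  · rw [if_pos hm, ← hm]
  · rw [if_neg hm]
    obtain ⟨i, hi⟩ : ∃ i, m i ≠ 0 := by
      by_contra h'
      push_neg at h'
      exact hm (Finsupp.ext fun j => by simpa using h' j).symm
    have hle : Finsupp.single i 1 ≤ m := Finsupp.single_le_iff.2 (Nat.one_le_iff_ne_zero.2 hi)
    set m' := m - Finsupp.single i 1 with hm'
    have hcp := coeff_pderiv i m' G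
    rw [h i, hm', tsub_add_cancel_of_le hle] at hcp
    have hne : ((m' i : ℚ) + 1) ≠ 0 := by positivity
    have h0 : (0 : ℚ) = ((m' i : ℚ) + 1) * MvPolynomial.coeff m G := by
      rw [← hcp]; simp
    rcases mul_eq_zero.1 h0.symm with h1 | h1
    · exact absurd h1 hne
    · exact h1

lemma totalDegree_pderiv_lt {f : MvPolynomial σ ℚ} (i : σ) (h : pderiv i f ≠ 0) :
    (pderiv i f).totalDegree < f.totalDegree := by
  classical
  have hD : 0 < f.totalDegree := by
    rcases Nat.eq_zero_or_pos f.totalDegree with h0 | h1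
    · exfalso
      apply h
      have hf : f = MvPolynomial.C (MvPolynomial.coeff 0 f) := by
        apply eq_C_of_pderiv_eq_zero
        intro j
        apply MvPolynomial.ext
        intro m
        rw [coeff_pderiv]
        have : MvPolynomial.coeff (m + Finsupp.single j 1) f = 0 := by
          by_contra hc
          have hmem := MvPolynomial.mem_support_iff.2 hc
          have := ((MvPolynomial.totalDegree_eq_zero_iff _ _).1 h0) _ hmem j
          simp [Finsupp.add_apply] at this
        simp [this]
      rw [hf, pderiv_C]
    · exact h1
  rw [MvPolynomial.totalDegree]
  rw [Finset.sup_lt_iff (by simpa using hD)]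
  intro m hm
  have hc : MvPolynomial.coeff m (pderiv i f) ≠ 0 := MvPolynomial.mem_support_iff.1 hm
  rw [coeff_pderiv] at hc
  have hcf : MvPolynomial.coeff (m + Finsupp.single i 1) f ≠ 0 := by
    intro h0; rw [h0, mul_zero] at hc; exact hc rfl
  have hle := MvPolynomial.le_totalDegree (MvPolynomial.mem_support_iff.2 hcf)
  have hsum : ((m + Finsupp.single i 1).sum fun _ e => e) = (m.sum fun _ e => e) + 1 := by
    rw [Finsupp.sum_add_index' (fun _ => rfl) (fun _ _ _ => rfl)]
    simp
  omega

/-- Chain rule for `pderiv` through `aeval` into another polynomial ring. -/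
lemma pderiv_aeval_eq_sum {s : ℕ} {τ : Type*} (R : Fin s → MvPolynomial τ ℚ) (j : τ)
    (G : MvPolynomial (Fin s) ℚ) :
    pderiv j (aeval R G) = ∑ l, aeval R (pderiv l G) * pderiv j (R l) := by
  classical
  induction G using MvPolynomial.induction_on with
  | C a => simp [MvPolynomial.algebraMap_eq]
  | add p q hp hq =>
    simp only [map_add, hp, hq, add_mul, Finset.sum_add_distrib]
  | mul_X p l hp =>
    have hsplit : ∀ t, aeval R (pderiv t (p * X l)) * pderiv j (R t)
        = (aeval R (pderiv t p) * pderiv j (R t)) * R l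
          + (if l = t then aeval R p * pderiv j (R l) else 0) := by
      intro t
      rw [pderiv_mul, map_add, add_mul, map_mul, aeval_X]
      congr 1
      · ring
      · rw [pderiv_X]
        rcases eq_or_ne l t with h | h
        · subst h; simp
        · rw [Pi.single_eq_of_ne h, if_neg h]
          simp
    have hsum : ∑ t, aeval R (pderiv t (p * X l)) * pderiv j (R t)
        = (∑ t, (aeval R (pderiv t p) * pderiv j (R t)) * R l)
          + aeval R p * pderiv j (R l) := by
      rw [Finset.sum_congr rfl fun t _ => hsplit t, Finset.sum_add_distrib,
        Finset.sum_ite_eq Finset.univ l (fun _ => aeval R p * pderiv j (R l))]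
      simp
    rw [map_mul, aeval_X, pderiv_mul, hp, Finset.sum_mul, hsum]

lemma aeval_aeval {s : ℕ} {τ : Type*} (z : τ → ℝ) (R : Fin s → MvPolynomial τ ℚ)
    (G : MvPolynomial (Fin s) ℚ) :
    aeval z (aeval R G) = aeval (fun l => aeval z (R l)) G := by
  induction G using MvPolynomial.induction_on with
  | C a => simp [MvPolynomial.algebraMap_eq]
  | add p q hp hq =>
    rw [map_add, map_add, map_add, hp, hq]
  | mul_X p l hp =>
    rw [map_mul, aeval_X, map_mul, hp, map_mul, aeval_X]


section Adm

variable {ι : Type} [Fintype ι]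

/-- cons for `Option`-indexed tuples. -/
def consO {α : Type*} (x : α) (u : ι → α) : Option ι → α := fun o => o.elim x u

@[simp] lemma consO_none {α : Type*} (x : α) (u : ι → α) : consO x u none = x := rfl
@[simp] lemma consO_some {α : Type*} (x : α) (u : ι → α) (i : ι) : consO x u (some i) = u i := rfl

/-- `v` is an admissible derivation vector for the tuple `u`. -/
def Adm (u v : ι → ℝ) : Prop :=
  ∀ Q : MvPolynomial ι ℚ, aeval u Q = 0 → ∑ j, aeval u (pderiv j Q) * v j = 0

lemma adm_of_algebraicIndependent {u : ι → ℝ} (hu : AlgebraicIndependent ℚ u) (v : ι → ℝ) :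
    Adm u v := by
  intro Q hQ
  have h0 : Q = 0 := (algebraicIndependent_iff.1 hu) Q hQ
  subst h0; simp

variable (u v : ι → ℝ) (x : ℝ)

def psiR (u : ι → ℝ) : MvPolynomial ι ℚ →+* ℝ :=
  (MvPolynomial.aeval u : MvPolynomial ι ℚ →ₐ[ℚ] ℝ).toRingHom

@[simp] lemma psiR_apply (Q : MvPolynomial ι ℚ) : psiR u Q = aeval u Q := rfl

def Dfun (Q : MvPolynomial ι ℚ) : ℝ := ∑ i, aeval u (pderiv i Q) * v i

def Tfun (w : ℝ) (H : MvPolynomial (Option ι) ℚ) : ℝ :=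
  (∑ i, aeval (consO x u) (pderiv (some i) H) * v i) + aeval (consO x u) (pderiv none H) * w

/-- the one-variable representation map. -/
def Th : Polynomial (MvPolynomial ι ℚ) →+* MvPolynomial (Option ι) ℚ :=
  Polynomial.eval₂RingHom
    ((rename (some : ι → Option ι)).toRingHom : MvPolynomial ι ℚ →+* MvPolynomial (Option ι) ℚ)
    (X none)

lemma Th_C (c : MvPolynomial ι ℚ) : Th (Polynomial.C c) = rename some c :=
  Polynomial.eval₂_C _ _

lemma Th_X : Th (Polynomial.X : Polynomial (MvPolynomial ι ℚ)) = X none :=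
  Polynomial.eval₂_X _ _

lemma Th_monomial (n : ℕ) (c : MvPolynomial ι ℚ) :
    Th (Polynomial.monomial n c) = rename some c * X none ^ n := by
  rw [← Polynomial.C_mul_X_pow_eq_monomial, map_mul, map_pow, Th_C, Th_X]

lemma Th_surjective : Function.Surjective (Th (ι := ι)) := by
  intro H
  induction H using MvPolynomial.induction_on with
  | C a => exact ⟨Polynomial.C (C a), by rw [Th_C, rename_C]⟩
  | add p q hp hq =>
    obtain ⟨qp, rfl⟩ := hp
    obtain ⟨qq, rfl⟩ := hq
    exact ⟨qp + qq, map_add _ _ _⟩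
  | mul_X p o hp =>
    obtain ⟨qp, rfl⟩ := hp
    cases o with
    | none => exact ⟨qp * Polynomial.X, by rw [map_mul, Th_X]⟩
    | some i => exact ⟨qp * Polynomial.C (X i), by rw [map_mul, Th_C, rename_X]⟩

lemma aeval_consO_rename (c : MvPolynomial ι ℚ) :
    aeval (consO x u) (rename some c) = aeval u c := by
  rw [aeval_rename]; rfl

lemma aeval_consO_Th (q : Polynomial (MvPolynomial ι ℚ)) :
    aeval (consO x u) (Th q) = Polynomial.eval₂ (psiR u) x q := by
  have h : ((MvPolynomial.aeval (consO x u) :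
        MvPolynomial (Option ι) ℚ →ₐ[ℚ] ℝ).toRingHom).comp (Th (ι := ι))
      = Polynomial.eval₂RingHom (psiR u) x := by
    apply Polynomial.ringHom_ext
    · intro c
      simp only [RingHom.comp_apply, Polynomial.coe_eval₂RingHom, Polynomial.eval₂_C]
      rw [show ((Th (ι := ι)) (Polynomial.C c)) = rename some c from Th_C c]
      exact aeval_consO_rename u x c
    · simp only [RingHom.comp_apply, Polynomial.coe_eval₂RingHom, Polynomial.eval₂_X]
      rw [show ((Th (ι := ι)) Polynomial.X) = X none from Th_X]
      simp
  exact RingHom.congr_fun h q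

lemma pderiv_none_rename (c : MvPolynomial ι ℚ) :
    pderiv (none : Option ι) (rename (some : ι → Option ι) c) = 0 := by
  apply pderiv_eq_zero_of_notMem_vars
  intro hmem
  obtain ⟨i, _, hi⟩ := mem_vars_rename _ _ hmem
  exact Option.some_ne_none i hi

lemma pderiv_none_Th (q : Polynomial (MvPolynomial ι ℚ)) :
    pderiv (none : Option ι) (Th q) = Th (Polynomial.derivative q) := by
  induction q using Polynomial.induction_on' with
  | add p q hp hq =>
    rw [map_add, map_add, hp, hq, Polynomial.derivative_add, map_add]
  | monomial n c =>
    rw [Th_monomial, Polynomial.derivative_monomial, Th_monomial]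
    rw [pderiv_mul, pderiv_none_rename, zero_mul, pderiv_pow, pderiv_X_self]
    rw [map_mul]
    have : (rename (some : ι → Option ι)) ((n : MvPolynomial ι ℚ)) = (n : MvPolynomial (Option ι) ℚ) :=
      map_natCast _ n
    rw [this]
    ring

lemma Tfun_zero (w : ℝ) : Tfun u v x w 0 = 0 := by
  unfold Tfun; simp

lemma Tfun_add (w : ℝ) (H₁ H₂ : MvPolynomial (Option ι) ℚ) :
    Tfun u v x w (H₁ + H₂) = Tfun u v x w H₁ + Tfun u v x w H₂ := by
  unfold Tfun
  simp only [map_add, add_mul]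
  rw [Finset.sum_add_distrib]
  ring

lemma Tfun_sub (w : ℝ) (H₁ H₂ : MvPolynomial (Option ι) ℚ) :
    Tfun u v x w (H₁ - H₂) = Tfun u v x w H₁ - Tfun u v x w H₂ := by
  unfold Tfun
  simp only [map_sub, sub_mul]
  rw [Finset.sum_sub_distrib]
  ring

lemma Tfun_sum (w : ℝ) {β : Type*} (s : Finset β) (f : β → MvPolynomial (Option ι) ℚ) :
    Tfun u v x w (∑ a ∈ s, f a) = ∑ a ∈ s, Tfun u v x w (f a) := by
  classical
  induction s using Finset.induction_on with
  | empty => simpa using Tfun_zero u v x w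
  | insert a s hnot ih =>
    rw [Finset.sum_insert hnot, Finset.sum_insert hnot, Tfun_add, ih]

lemma Tfun_mul (w : ℝ) (H₁ H₂ : MvPolynomial (Option ι) ℚ) :
    Tfun u v x w (H₁ * H₂)
      = aeval (consO x u) H₁ * Tfun u v x w H₂ + aeval (consO x u) H₂ * Tfun u v x w H₁ := by
  unfold Tfun
  have hsp : ∀ o : Option ι, aeval (consO x u) (pderiv o (H₁ * H₂))
      = aeval (consO x u) H₁ * aeval (consO x u) (pderiv o H₂)
        + aeval (consO x u) H₂ * aeval (consO x u) (pderiv o H₁) := by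
    intro o; rw [pderiv_mul, map_add, map_mul, map_mul]; ring
  simp only [hsp, add_mul, mul_assoc]
  rw [Finset.sum_add_distrib, ← Finset.mul_sum, ← Finset.mul_sum]
  ring

lemma Tfun_rename (w : ℝ) (c : MvPolynomial ι ℚ) :
    Tfun u v x w (rename some c) = Dfun u v c := by
  unfold Tfun Dfun
  rw [pderiv_none_rename, map_zero, zero_mul, add_zero]
  apply Finset.sum_congr rfl
  intro i _
  rw [pderiv_rename (Option.some_injective ι), aeval_consO_rename]

lemma aeval_consO_Xnone : aeval (consO x u) ((X (none : Option ι)) : MvPolynomial (Option ι) ℚ) = x := by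
  simp

lemma Tfun_Xpow (w : ℝ) (n : ℕ) :
    Tfun u v x w ((X (none : Option ι)) ^ n) = n * x ^ (n - 1) * w := by
  unfold Tfun
  have h1 : ∀ i : ι, pderiv (some i) (((X (none : Option ι)) : MvPolynomial (Option ι) ℚ) ^ n) = 0 := by
    intro i
    rw [pderiv_pow, pderiv_X_of_ne (by simp), mul_zero]
  simp only [h1, map_zero, zero_mul, Finset.sum_const_zero, zero_add]
  rw [pderiv_pow, pderiv_X_self, mul_one, map_mul, map_pow]
  simp

lemma Tfun_Th_monomial (w : ℝ) (n : ℕ) (c : MvPolynomial ι ℚ) :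
    Tfun u v x w (Th (Polynomial.monomial n c))
      = x ^ n * Dfun u v c + aeval u c * (n * x ^ (n - 1) * w) := by
  rw [Th_monomial, Tfun_mul, Tfun_rename, Tfun_Xpow, aeval_consO_rename, map_pow,
    aeval_consO_Xnone]
  ring

/-- `Tfun` vanishes on polynomials all whose coefficients evaluate to zero (any `w`). -/
lemma Tfun_Th_eq_zero (hadm : Adm u v) (w : ℝ) (q : Polynomial (MvPolynomial ι ℚ))
    (hq : Polynomial.map (psiR u) q = 0) : Tfun u v x w (Th q) = 0 := by
  have hco : ∀ n, aeval u (q.coeff n) = 0 := by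
    intro n
    have h := congrArg (fun p => Polynomial.coeff p n) hq
    simpa [Polynomial.coeff_map] using h
  conv_lhs => rw [q.as_sum_support]
  rw [map_sum, Tfun_sum]
  apply Finset.sum_eq_zero
  intro n _
  rw [Tfun_Th_monomial, hco n]
  have hD : Dfun u v (q.coeff n) = 0 := hadm _ (hco n)
  rw [hD]
  ring

lemma sum_option_Tfun (w : ℝ) (H : MvPolynomial (Option ι) ℚ) :
    ∑ o : Option ι, aeval (consO x u) (pderiv o H) * (consO w v o) = Tfun u v x w H := by
  rw [Fintype.sum_option, add_comm]
  rfl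





theorem adm_extend {u v : ι → ℝ} (hadm : Adm u v) (x : ℝ) :
    ∃ w : ℝ, Adm (consO x u) (consO w v) := by
  classical
  by_cases halg : ∃ q : Polynomial (MvPolynomial ι ℚ),
      Polynomial.map (psiR u) q ≠ 0 ∧ Polynomial.eval₂ (psiR u) x q = 0
  · set ψ := psiR u with hψdef
    set S : Set ℕ := {n | ∃ q : Polynomial (MvPolynomial ι ℚ),
      Polynomial.map ψ q ≠ 0 ∧ Polynomial.eval₂ ψ x q = 0 ∧ (Polynomial.map ψ q).natDegree = n}
      with hSdef
    obtain ⟨q1, hq1, hq2⟩ := halg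
    have hSne : S.Nonempty := ⟨_, q1, hq1, hq2, rfl⟩
    obtain ⟨m₀, hm1, hm2, hm3⟩ := Nat.sInf_mem hSne
    set n := sInf S with hndef
    have hmin : ∀ q : Polynomial (MvPolynomial ι ℚ), Polynomial.map ψ q ≠ 0 →
        Polynomial.eval₂ ψ x q = 0 → n ≤ (Polynomial.map ψ q).natDegree :=
      fun q h1 h2 => Nat.sInf_le ⟨q, h1, h2, rfl⟩
    have hn1 : n ≠ 0 := by
      intro h0
      rw [h0] at hm3
      obtain ⟨c, hc⟩ := Polynomial.natDegree_eq_zero.1 hm3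
      have hev : Polynomial.eval x (Polynomial.map ψ m₀) = 0 := by
        rw [Polynomial.eval_map]; exact hm2
      rw [← hc, Polynomial.eval_C] at hev
      apply hm1
      rw [← hc, hev, map_zero]
    set δ := Polynomial.eval x (Polynomial.map ψ (Polynomial.derivative m₀)) with hδdef
    have hδ : δ ≠ 0 := by
      intro h0
      have hd_ne : Polynomial.map ψ (Polynomial.derivative m₀) ≠ 0 := by
        rw [← Polynomial.derivative_map]
        intro hcon
        have h := Polynomial.natDegree_eq_zero_of_derivative_eq_zero hcon
        rw [hm3] at h; exact hn1 h
      have hd_ev : Polynomial.eval₂ ψ x (Polynomial.derivative m₀) = 0 := by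
        rw [← Polynomial.eval_map]; exact h0
      have hge := hmin _ hd_ne hd_ev
      have hlt : (Polynomial.map ψ (Polynomial.derivative m₀)).natDegree < n := by
        rw [← Polynomial.derivative_map]
        have := Polynomial.natDegree_derivative_lt (p := Polynomial.map ψ m₀) (by rw [hm3]; exact hn1)
        rw [hm3] at this
        exact this
      omega
    set A := ∑ i, aeval (consO x u) (pderiv (some i) (Th m₀)) * v i with hA
    set w := -A / δ with hw
    have hnone : aeval (consO x u) (pderiv none (Th m₀)) = δ := by
      rw [pderiv_none_Th, aeval_consO_Th, ← Polynomial.eval_map]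
    have hTm₀ : Tfun u v x w (Th m₀) = 0 := by
      show A + aeval (consO x u) (pderiv none (Th m₀)) * w = 0
      rw [hnone, hw]
      field_simp
      ring
    have hq0 : ∀ q : Polynomial (MvPolynomial ι ℚ), Polynomial.eval₂ ψ x q = 0 →
        aeval (consO x u) (Th q) = 0 := fun q h => by rw [aeval_consO_Th]; exact h
    have key : ∀ N : ℕ, ∀ q : Polynomial (MvPolynomial ι ℚ),
        (Polynomial.map ψ q).natDegree ≤ N → Polynomial.eval₂ ψ x q = 0 →
        Tfun u v x w (Th q) = 0 := by
      intro N
      induction N using Nat.strong_induction_on with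
      | _ N IH =>
      intro q hdeg heval
      by_cases h0 : Polynomial.map ψ q = 0
      · exact Tfun_Th_eq_zero u v x hadm w q h0
      set Nq := (Polynomial.map ψ q).natDegree with hNq
      have hnNq : n ≤ Nq := hmin q h0 heval
      set μ := m₀.coeff n with hμ
      have hψμ : ψ μ ≠ 0 := by
        have hcm : ψ μ = (Polynomial.map ψ m₀).coeff n := (Polynomial.coeff_map _ _).symm
        rw [hcm, ← hm3]
        exact Polynomial.leadingCoeff_ne_zero.2 hm1
      set e := Nq - n with he
      set r := Polynomial.C μ * q - Polynomial.C (q.coeff Nq) * (Polynomial.X ^ e * m₀) with hr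
      have hreval : Polynomial.eval₂ ψ x r = 0 := by
        rw [hr, Polynomial.eval₂_sub, Polynomial.eval₂_mul, Polynomial.eval₂_mul,
          Polynomial.eval₂_mul, Polynomial.eval₂_C, Polynomial.eval₂_C, heval, hm2]
        ring
      have hrcoeff : ∀ M, Nq ≤ M → (Polynomial.map ψ r).coeff M = 0 := by
        intro M hM
        have heM : M = (M - e) + e := by omega
        rw [hr, Polynomial.map_sub, Polynomial.map_mul, Polynomial.map_mul, Polynomial.map_mul,
          Polynomial.map_pow,
          Polynomial.map_C, Polynomial.map_C, Polynomial.map_X, Polynomial.coeff_sub,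
          Polynomial.coeff_C_mul, Polynomial.coeff_C_mul, heM, Polynomial.coeff_X_pow_mul]
        rcases eq_or_ne M Nq with hMN | hMN
        · have hMe : M - e = n := by omega
          rw [hMe]
          have h1 : (Polynomial.map ψ m₀).coeff n = ψ μ := Polynomial.coeff_map _ _
          have h2 : (Polynomial.map ψ q).coeff (n + e) = ψ (q.coeff Nq) := by
            have : n + e = Nq := by omega
            rw [this]; exact Polynomial.coeff_map _ _
          rw [h1, h2]
          ring
        · have h1 : (Polynomial.map ψ q).coeff ((M - e) + e) = 0 :=
            Polynomial.coeff_eq_zero_of_natDegree_lt (by omega)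
          have h2 : (Polynomial.map ψ m₀).coeff (M - e) = 0 :=
            Polynomial.coeff_eq_zero_of_natDegree_lt (by rw [hm3]; omega)
          rw [h1, h2]
          ring
      have hTr : Tfun u v x w (Th r) = 0 := by
        by_cases hrz : Polynomial.map ψ r = 0
        · exact Tfun_Th_eq_zero u v x hadm w r hrz
        · have hlt : (Polynomial.map ψ r).natDegree < Nq := by
            by_contra hge
            push_neg at hge
            exact hrz (Polynomial.leadingCoeff_eq_zero.1 (hrcoeff _ hge))
          exact IH (Polynomial.map ψ r).natDegree (lt_of_lt_of_le hlt hdeg) r le_rfl hreval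
      have hThr : Th r = rename some μ * Th q
          - rename some (q.coeff Nq) * ((X none) ^ e * Th m₀) := by
        rw [hr, map_sub, map_mul, map_mul, map_mul, map_pow, Th_C, Th_C, Th_X]
      rw [hThr, Tfun_sub, Tfun_mul, Tfun_mul, Tfun_mul, Tfun_rename, Tfun_rename,
        Tfun_Xpow, hTm₀, hq0 q heval, hq0 m₀ hm2, aeval_consO_rename, aeval_consO_rename,
        map_mul, map_pow, aeval_consO_Xnone, hq0 m₀ hm2] at hTr
      have hμa : ψ μ = aeval u μ := rfl
      have hTr' : ψ μ * Tfun u v x w (Th q) = 0 := by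
        rw [← hTr, hμa]
        ring
      rcases mul_eq_zero.1 hTr' with h | h
      · exact absurd h hψμ
      · exact h
    refine ⟨w, ?_⟩
    intro H hH
    obtain ⟨q, rfl⟩ := Th_surjective H
    rw [sum_option_Tfun]
    exact key _ q le_rfl (by rw [← aeval_consO_Th]; exact hH)
  · refine ⟨0, ?_⟩
    intro H hH
    obtain ⟨q, rfl⟩ := Th_surjective H
    have h0 : Polynomial.map (psiR u) q = 0 := by
      by_contra hne
      exact halg ⟨q, hne, by rw [← aeval_consO_Th]; exact hH⟩
    rw [sum_option_Tfun]
    exact Tfun_Th_eq_zero u v x hadm 0 q h0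

end Adm



lemma sum_elim_injective {α β γ : Type*} {f : α → γ} {g : β → γ}
    (hf : Function.Injective f) (hg : Function.Injective g)
    (hd : ∀ a b, f a ≠ g b) : Function.Injective (Sum.elim f g) := by
  intro a b hab
  rcases a with a | a <;> rcases b with b | b <;>
    simp only [Sum.elim_inl, Sum.elim_inr] at hab
  · exact congrArg Sum.inl (hf hab)
  · exact absurd hab (hd _ _)
  · exact absurd hab.symm (hd _ _)
  · exact congrArg Sum.inr (hg hab)

theorem adm_tower {ι : Type} [Fintype ι] {κ : Type} (u : ι → ℝ) (V0 : κ → ι → ℝ)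
    (hadm : ∀ m, Adm u (V0 m)) (n : ℕ) (z : Fin n → ℝ) :
    ∃ (ι' : Type) (_ : Fintype ι') (g : ι → ι') (g' : Fin n → ι') (U : ι' → ℝ)
      (V : κ → ι' → ℝ),
      Function.Injective (Sum.elim g' g) ∧ (∀ i, U (g i) = u i) ∧ (∀ j, U (g' j) = z j) ∧
      (∀ m i, V m (g i) = V0 m i) ∧ ∀ m, Adm U (V m) := by
  induction n with
  | zero =>
    refine ⟨ι, inferInstance, id, Fin.elim0, u, V0, ?_, fun _ => rfl, fun j => j.elim0,
      fun _ _ => rfl, hadm⟩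
    exact sum_elim_injective (fun a => a.elim0) (fun a b h => h) (fun a => a.elim0)
  | succ n IH =>
    obtain ⟨ι', inst, g, g', U, V, hinj, hUg, hUg', hVg, hAdm⟩ := IH (fun j => z j.succ)
    have hg' : Function.Injective g' := fun a b h => by
      have h2 := hinj (show Sum.elim g' g (Sum.inl a) = Sum.elim g' g (Sum.inl b) from h)
      exact Sum.inl.inj h2
    have hg : Function.Injective g := fun a b h => by
      have h2 := hinj (show Sum.elim g' g (Sum.inr a) = Sum.elim g' g (Sum.inr b) from h)
      exact Sum.inr.inj h2
    have hdisj : ∀ a b, g' a ≠ g b := fun a b h => by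
      have h2 := hinj (show Sum.elim g' g (Sum.inl a) = Sum.elim g' g (Sum.inr b) from h)
      simp at h2
    have hext : ∀ m, ∃ w, Adm (consO (z 0) U) (consO w (V m)) :=
      fun m => adm_extend (hAdm m) (z 0)
    choose w hwAdm using hext
    refine ⟨Option ι', inferInstance, fun i => some (g i),
      Fin.cases none (fun j => some (g' j)),
      consO (z 0) U, fun m => consO (w m) (V m), ?_, fun i => hUg i, ?_,
      fun m i => hVg m i, hwAdm⟩
    · apply sum_elim_injective
      · intro a b h
        rcases Fin.eq_zero_or_eq_succ a with rfl | ⟨a', rfl⟩ <;>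
          rcases Fin.eq_zero_or_eq_succ b with rfl | ⟨b', rfl⟩
        · rfl
        · simp at h
        · simp at h
        · simp only [Fin.cases_succ] at h
          exact congrArg Fin.succ (hg' (Option.some.inj h))
      · exact fun a b h => hg (Option.some.inj h)
      · intro a b
        rcases Fin.eq_zero_or_eq_succ a with rfl | ⟨a', rfl⟩
        · simp
        · simp only [Fin.cases_succ]
          intro h
          exact hdisj a' b (Option.some.inj h)
    · intro j
      rcases Fin.eq_zero_or_eq_succ j with rfl | ⟨j', rfl⟩
      · simp
      · simp only [Fin.cases_succ, consO_some]
        exact hUg' j'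

theorem exists_dual_basis {s d : ℕ} (R : Fin s → MvPolynomial (Fin d) ℚ) (y : Fin d → ℝ)
    (ha : AlgebraicIndependent ℚ (fun l => aeval y (R l))) :
    ∃ vv : Fin s → Fin d → ℝ, ∀ l m,
      (∑ j, aeval y (pderiv j (R l)) * vv m j) = if l = m then 1 else 0 := by
  classical
  set a : Fin s → ℝ := fun l => aeval y (R l) with hadef
  have hbase : ∀ m : Fin s, Adm a (Pi.single m 1) :=
    fun m => adm_of_algebraicIndependent ha _
  obtain ⟨ι', inst, g, g', U, V, hinj, hUg, hUg', hVg, hAdm⟩ :=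
    adm_tower a (fun m => Pi.single m (1 : ℝ)) hbase d y
  have hg' : Function.Injective g' := fun a b h => by
    have h2 := hinj (show Sum.elim g' g (Sum.inl a) = Sum.elim g' g (Sum.inl b) from h)
    exact Sum.inl.inj h2
  have hdisj : ∀ i l, g' i ≠ g l := fun i l h => by
    have h2 := hinj (show Sum.elim g' g (Sum.inl i) = Sum.elim g' g (Sum.inr l) from h)
    simp at h2
  refine ⟨fun m j => V m (g' j), ?_⟩
  intro l m
  set Q : MvPolynomial ι' ℚ := rename g' (R l) - X (g l) with hQdef
  have hUcomp : (U ∘ g') = y := funext hUg'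
  have hQ0 : aeval U Q = 0 := by
    rw [hQdef, map_sub, aeval_rename, aeval_X, hUcomp, hUg l]
    simp [hadef]
  have hAdmQ := hAdm m Q hQ0
  have hsplit : ∀ t : ι', aeval U (pderiv t Q) * V m t
      = aeval U (pderiv t (rename g' (R l))) * V m t
        - aeval U (pderiv t (X (g l) : MvPolynomial ι' ℚ)) * V m t := by
    intro t
    rw [hQdef, map_sub, map_sub]
    ring
  rw [Finset.sum_congr rfl (fun t _ => hsplit t), Finset.sum_sub_distrib] at hAdmQ
  have hfirst : ∑ t : ι', aeval U (pderiv t (rename g' (R l))) * V m t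
      = ∑ j, aeval y (pderiv j (R l)) * V m (g' j) := by
    have hvan : ∀ t ∈ Finset.univ, t ∉ Finset.image g' Finset.univ →
        aeval U (pderiv t (rename g' (R l))) * V m t = 0 := by
      intro t _ ht
      have hz : pderiv t (rename g' (R l)) = 0 := by
        apply pderiv_eq_zero_of_notMem_vars
        intro hmem
        obtain ⟨i, _, hi⟩ := mem_vars_rename _ _ hmem
        exact ht (Finset.mem_image.2 ⟨i, Finset.mem_univ i, hi⟩)
      rw [hz, map_zero, zero_mul]
    rw [← Finset.sum_subset (Finset.subset_univ (Finset.image g' Finset.univ)) hvan]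
    rw [Finset.sum_image (fun a _ b _ h => hg' h)]
    apply Finset.sum_congr rfl
    intro j _
    rw [pderiv_rename hg', aeval_rename, hUcomp]
  have hsecond : ∑ t : ι', aeval U (pderiv t (X (g l) : MvPolynomial ι' ℚ)) * V m t
      = if l = m then 1 else 0 := by
    rw [Finset.sum_eq_single (g l)]
    · rw [pderiv_X_self, map_one, one_mul, hVg]
      rw [Pi.single_apply]
    · intro t _ ht
      rw [pderiv_X_of_ne (fun h => ht h.symm), map_zero, zero_mul]
    · intro h
      exact absurd (Finset.mem_univ _) h
  rw [hfirst, hsecond] at hAdmQ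
  have := sub_eq_zero.1 hAdmQ
  exact this



theorem algIndep_of_rows_indep {d s : ℕ} (R : Fin s → MvPolynomial (Fin d) ℚ)
    (p : Fin d → ℝ) (hp : AlgebraicIndependent ℚ p)
    (hrows : LinearIndependent ℝ (fun l => (fun j => aeval p (pderiv j (R l))))) :
    AlgebraicIndependent ℚ (fun l => aeval p (R l)) := by
  classical
  rw [algebraicIndependent_iff]
  intro G hG
  by_contra hG0
  set Bad : Set ℕ := {n | ∃ G' : MvPolynomial (Fin s) ℚ, G' ≠ 0 ∧
    aeval (fun l => aeval p (R l)) G' = 0 ∧ G'.totalDegree = n} with hBad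
  have hBadne : Bad.Nonempty := ⟨_, G, hG0, hG, rfl⟩
  obtain ⟨G₀, hG₀ne, hG₀val, hG₀deg⟩ := Nat.sInf_mem hBadne
  have hmin : ∀ G' : MvPolynomial (Fin s) ℚ, G' ≠ 0 →
      aeval (fun l => aeval p (R l)) G' = 0 → sInf Bad ≤ G'.totalDegree :=
    fun G' h1 h2 => Nat.sInf_le ⟨G', h1, h2, rfl⟩
  have hcomp0 : (aeval R) G₀ = 0 := by
    apply (algebraicIndependent_iff.1 hp)
    rw [aeval_aeval]
    exact hG₀val
  have hkey : ∀ l, aeval (fun l' => aeval p (R l')) (pderiv l G₀) = 0 := by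
    have hj : ∀ j : Fin d,
        ∑ l, aeval p (aeval R (pderiv l G₀)) * aeval p (pderiv j (R l)) = 0 := by
      intro j
      have h1 : pderiv j ((aeval R) G₀) = 0 := by rw [hcomp0, map_zero]
      rw [pderiv_aeval_eq_sum] at h1
      have h2 := congrArg (aeval p) h1
      rw [map_sum, map_zero] at h2
      simpa [map_mul] using h2
    intro l
    have hlin := Fintype.linearIndependent_iff.1 hrows
      (fun l' => aeval p (aeval R (pderiv l' G₀))) ?_ l
    · rw [← aeval_aeval]; exact hlin
    · funext j
      simpa [Finset.sum_apply, smul_eq_mul] using hj j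
  have hpd : ∀ l, pderiv l G₀ = 0 := by
    intro l
    by_contra hne
    have hlt := totalDegree_pderiv_lt l hne
    have hge := hmin _ hne (hkey l)
    omega
  have hC := eq_C_of_pderiv_eq_zero hpd
  have hc0 : MvPolynomial.coeff 0 G₀ = 0 := by
    rw [hC, aeval_C] at hG₀val
    have : ((MvPolynomial.coeff 0 G₀ : ℚ) : ℝ) = 0 := hG₀val
    exact_mod_cast this
  exact hG₀ne (by rw [hC, hc0, map_zero])

lemma exists_indep_rows {m n : Type} [Fintype m] [Fintype n] (M : Matrix m n ℝ)
    {r : ℕ} (h : M.rank = r) :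
    ∃ ρ : Fin r → m, Function.Injective ρ ∧ LinearIndependent ℝ (fun l => M (ρ l)) := by
  classical
  obtain ⟨b, hbsub, hbspan, hbind⟩ := exists_linearIndependent ℝ (Set.range M)
  have hbfin : b.Finite := (Set.finite_range M).subset hbsub
  haveI := hbfin.fintype
  have hcard : b.toFinset.card = r := by
    rw [← finrank_span_set_eq_card hbind, hbspan]
    exact (Matrix.rank_eq_finrank_span_row M).symm.trans h
  have hcard' : Fintype.card b = r := by rwa [Set.toFinset_card] at hcard
  set e := (Fintype.equivFinOfCardEq hcard').symm with he
  have hsel : ∀ w : b, ∃ i : m, M i = (w : n → ℝ) := fun w => hbsub w.2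
  choose sel hsel' using hsel
  refine ⟨fun l => sel (e l), ?_, ?_⟩
  · intro l1 l2 h12
    apply e.injective
    apply Subtype.ext
    rw [← hsel' (e l1), ← hsel' (e l2)]
    exact congrArg M h12
  · have hfun : (fun l => M (sel (e l))) = (fun l => ((e l : b) : n → ℝ)) := by
      funext l; rw [hsel']
    rw [hfun]
    exact hbind.comp e e.injective

lemma rank_ge_of_indep_rows {m n : Type} [Fintype m] [Fintype n] (M : Matrix m n ℝ)
    {r : ℕ} (ρ : Fin r → m) (h : LinearIndependent ℝ (fun l => M (ρ l))) : r ≤ M.rank := by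
  rw [Matrix.rank_eq_finrank_span_row]
  have h1 : Submodule.span ℝ (Set.range (fun l => M (ρ l)))
      ≤ Submodule.span ℝ (Set.range M) :=
    Submodule.span_mono (Set.range_comp_subset_range ρ M)
  calc r = Module.finrank ℝ (Submodule.span ℝ (Set.range (fun l => M (ρ l)))) := by
        rw [finrank_span_eq_card h, Fintype.card_fin]
    _ ≤ Module.finrank ℝ (Submodule.span ℝ (Set.range M)) := Submodule.finrank_mono h1

lemma indep_rows_of_det {m n : Type} [Fintype m] [Fintype n] {r : ℕ} (M : Matrix m n ℝ)
    (ρ : Fin r → m) (τ : Fin r → n) (hdet : (M.submatrix ρ τ).det ≠ 0) :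
    LinearIndependent ℝ (fun l => M (ρ l)) := by
  have hsub : LinearIndependent ℝ (fun l => (M.submatrix ρ τ) l) :=
    Matrix.linearIndependent_rows_iff_isUnit.2
      ((Matrix.isUnit_iff_isUnit_det _).2 (isUnit_iff_ne_zero.2 hdet))
  rw [Fintype.linearIndependent_iff] at hsub ⊢
  intro c hc l
  apply hsub c ?_ l
  funext t
  have h1 := congrFun hc (τ t)
  simpa [Finset.sum_apply, smul_eq_mul] using h1

lemma exists_det_submatrix {m n : Type} [Fintype m] [Fintype n] [DecidableEq m] [DecidableEq n]
    (M : Matrix m n ℝ) {r : ℕ} (h : M.rank = r) :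
    ∃ (ρ : Fin r → m) (τ : Fin r → n), Function.Injective ρ ∧ Function.Injective τ ∧
      (M.submatrix ρ τ).det ≠ 0 := by
  obtain ⟨ρ, hρinj, hρind⟩ := exists_indep_rows M h
  set M' : Matrix (Fin r) n ℝ := Matrix.of (fun l j => M (ρ l) j) with hM'
  have hM'rank : M'.rank = r := by
    have h2 : LinearIndependent ℝ (fun l => M' l) := hρind
    rw [h2.rank_matrix, Fintype.card_fin]
  have htrank : (M'.transpose).rank = r := by rw [Matrix.rank_transpose]; exact hM'rank
  obtain ⟨τ, hτinj, hτind⟩ := exists_indep_rows M'.transpose htrank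
  refine ⟨ρ, τ, hρinj, hτinj, ?_⟩
  have hQ : LinearIndependent ℝ (fun t => (M.submatrix ρ τ).transpose t) := hτind
  have hunit := Matrix.linearIndependent_cols_iff_isUnit.1 hQ
  exact ((Matrix.isUnit_iff_isUnit_det _).1 hunit).ne_zero


end GenericRegAux

open GenericRegAux in
/-- If `f : ℝ^d → ℝ^k` is a polynomial map with rational coefficients and
`p` is generic, then `f(p)` is a regular value of `f`: for every `y` with `f(y) = f(p)`,
the Jacobian of `f` at `y` has rank at least the rank of the Jacobian at any other point
(i.e. maximal rank). -/
theorem generic_value_is_regular_value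
    {d k : ℕ} (P : Fin k → MvPolynomial (Fin d) ℚ)
    (p : Fin d → ℝ) (hp : AlgebraicIndependent ℚ p) :
    ∀ y : Fin d → ℝ,
      (∀ i, MvPolynomial.aeval y (P i) = MvPolynomial.aeval p (P i)) →
      ∀ x : Fin d → ℝ,
        (Matrix.of fun (i : Fin k) (j : Fin d) =>
            MvPolynomial.aeval x (MvPolynomial.pderiv j (P i))).rank ≤
        (Matrix.of fun (i : Fin k) (j : Fin d) =>
            MvPolynomial.aeval y (MvPolynomial.pderiv j (P i))).rank := by
  classical
  intro y hy x
  set Jx : Matrix (Fin k) (Fin d) ℝ := Matrix.of fun (i : Fin k) (j : Fin d) =>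
      MvPolynomial.aeval x (MvPolynomial.pderiv j (P i)) with hJx
  set Jy : Matrix (Fin k) (Fin d) ℝ := Matrix.of fun (i : Fin k) (j : Fin d) =>
      MvPolynomial.aeval y (MvPolynomial.pderiv j (P i)) with hJy
  set Jp : Matrix (Fin k) (Fin d) ℝ := Matrix.of fun (i : Fin k) (j : Fin d) =>
      MvPolynomial.aeval p (MvPolynomial.pderiv j (P i)) with hJp
  set Jf : Matrix (Fin k) (Fin d) (MvPolynomial (Fin d) ℚ) :=
      Matrix.of (fun i j => MvPolynomial.pderiv j (P i)) with hJf
  obtain ⟨ρ, τ, hρinj, hτinj, hdetx⟩ := exists_det_submatrix Jx rfl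
  -- determinant transfer from x to p via the formal determinant
  set Δ : MvPolynomial (Fin d) ℚ := (Jf.submatrix ρ τ).det with hΔ
  have hmapx : ((MvPolynomial.aeval x : MvPolynomial (Fin d) ℚ →ₐ[ℚ] ℝ) :
      MvPolynomial (Fin d) ℚ →+* ℝ).mapMatrix (Jf.submatrix ρ τ) = Jx.submatrix ρ τ := by
    ext i j
    rfl
  have hmapp : ((MvPolynomial.aeval p : MvPolynomial (Fin d) ℚ →ₐ[ℚ] ℝ) :
      MvPolynomial (Fin d) ℚ →+* ℝ).mapMatrix (Jf.submatrix ρ τ) = Jp.submatrix ρ τ := by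
    ext i j
    rfl
  have hΔx : MvPolynomial.aeval x Δ = (Jx.submatrix ρ τ).det := by
    rw [hΔ, ← hmapx]
    exact RingHom.map_det _ _
  have hΔne : Δ ≠ 0 := by
    intro h0
    apply hdetx
    rw [← hΔx, h0, map_zero]
  have hΔp : MvPolynomial.aeval p Δ ≠ 0 := by
    intro h0
    exact hΔne ((algebraicIndependent_iff.1 hp) Δ h0)
  have hdetp : (Jp.submatrix ρ τ).det ≠ 0 := by
    rw [← hmapp, ← RingHom.map_det]
    exact hΔp
  -- rows of Jp at ρ are independent, hence the values are algebraically independent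
  have hrowsp : LinearIndependent ℝ (fun l => Jp (ρ l)) := indep_rows_of_det Jp ρ τ hdetp
  have halg : AlgebraicIndependent ℚ (fun l => MvPolynomial.aeval p (P (ρ l))) :=
    algIndep_of_rows_indep (fun l => P (ρ l)) p hp hrowsp
  have halgy : AlgebraicIndependent ℚ (fun l => MvPolynomial.aeval y (P (ρ l))) := by
    have hfun : (fun l => MvPolynomial.aeval y (P (ρ l)))
        = (fun l => MvPolynomial.aeval p (P (ρ l))) := funext fun l => hy (ρ l)
    rw [hfun]
    exact halg
  obtain ⟨vv, hvv⟩ := exists_dual_basis (fun l => P (ρ l)) y halgy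
  -- rows of Jy at ρ are independent
  have hrowsy : LinearIndependent ℝ (fun l => Jy (ρ l)) := by
    rw [Fintype.linearIndependent_iff]
    intro c hc m
    have h1 : ∑ l, c l * (∑ j, MvPolynomial.aeval y (MvPolynomial.pderiv j (P (ρ l))) * vv m j)
        = c m := by
      rw [Finset.sum_congr rfl (fun l _ => by rw [hvv l m])]
      simp
    have h2 : ∑ l, c l * (∑ j, MvPolynomial.aeval y (MvPolynomial.pderiv j (P (ρ l))) * vv m j)
        = 0 := by
      have hswap : ∑ l, c l * (∑ j, MvPolynomial.aeval y (MvPolynomial.pderiv j (P (ρ l))) * vv m j)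
          = ∑ j, (∑ l, c l * MvPolynomial.aeval y (MvPolynomial.pderiv j (P (ρ l)))) * vv m j := by
        rw [Finset.sum_congr rfl (fun l _ => Finset.mul_sum _ _ _)]
        rw [Finset.sum_comm]
        apply Finset.sum_congr rfl
        intro j _
        rw [Finset.sum_mul]
        apply Finset.sum_congr rfl
        intro l _
        ring
      rw [hswap]
      apply Finset.sum_eq_zero
      intro j _
      have hcj := congrFun hc j
      simp only [Finset.sum_apply, Pi.smul_apply, smul_eq_mul, Pi.zero_apply] at hcj
      have hcj' : ∑ l, c l * MvPolynomial.aeval y (MvPolynomial.pderiv j (P (ρ l))) = 0 := hcj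
      rw [hcj', zero_mul]
    rw [h1] at h2
    exact h2

  exact le_trans (le_of_eq rfl) (rank_ge_of_indep_rows Jy ρ hrowsy)
end
end

section
/- Let (G, ψ) be a Γ-labeled graph (Γ a free abelian group) and let E₁, E₂ be balanced edge sets in G such that E₁ ∪ E₂ is unbalanced. Then the graph with vertex set V(E₁) ∩ V(E₂) and edge set E₁ ∩ E₂ is disconnected (this includes the case where it has at most one vertex, or has isolated vertices making it disconnected). -/
open Finset

/-- The set of vertices incident to an edge set `F` in a multigraph with
endpoint maps `head`, `tail`. -/
def labVerts {V ε : Type*} [DecidableEq V] [DecidableEq ε]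
    (head tail : ε → V) (F : Finset ε) : Finset V :=
  F.image head ∪ F.image tail

/-- An edge set `F` of a `Γ`-labeled graph is balanced if the label of every closed walk in
`F` is the identity; equivalently, the labels on `F` are given by a potential `θ : V → Γ`. -/
def IsBalanced {V ε Γ : Type*} [AddCommGroup Γ]
    (head tail : ε → V) (ψ : ε → Γ) (F : Finset ε) : Prop :=
  ∃ θ : V → Γ, ∀ e ∈ F, ψ e = θ (head e) - θ (tail e)

/-- Adjacency using only edges of the edge set `F`. -/
def labAdj {V ε : Type*} (head tail : ε → V) (F : Finset ε) (u w : V) : Prop :=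
  ∃ e ∈ F, (head e = u ∧ tail e = w) ∨ (head e = w ∧ tail e = u)

/-- Lemma 5.3 / lem:disconnected. If `E₁` and `E₂` are balanced edge sets
whose union is unbalanced, then the graph `(V(E₁) ∩ V(E₂), E₁ ∩ E₂)` is disconnected
(where a graph with at most one vertex also counts as disconnected). -/
theorem intersection_disconnected_of_balanced_union_unbalanced
    {V ε Γ : Type*} [DecidableEq V] [DecidableEq ε] [AddCommGroup Γ]
    (head tail : ε → V) (ψ : ε → Γ) (E₁ E₂ : Finset ε)
    (h1 : IsBalanced head tail ψ E₁) (h2 : IsBalanced head tail ψ E₂)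
    (hu : ¬ IsBalanced head tail ψ (E₁ ∪ E₂)) :
    (labVerts head tail E₁ ∩ labVerts head tail E₂).card ≤ 1 ∨
      ∃ u ∈ labVerts head tail E₁ ∩ labVerts head tail E₂,
        ∃ w ∈ labVerts head tail E₁ ∩ labVerts head tail E₂,
          ¬ Relation.ReflTransGen (labAdj head tail (E₁ ∩ E₂)) u w := by
  by_contra hcon
  push_neg at hcon
  obtain ⟨hcard, hconn⟩ := hcon
  obtain ⟨θ₁, hθ₁⟩ := h1
  obtain ⟨θ₂, hθ₂⟩ := h2
  set S := labVerts head tail E₁ ∩ labVerts head tail E₂ with hS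
  have hpos : 0 < S.card := by omega
  obtain ⟨u₀, hu₀⟩ := Finset.card_pos.mp hpos
  have hmemh : ∀ (F : Finset ε), ∀ e ∈ F, head e ∈ labVerts head tail F := fun F e he =>
    Finset.mem_union_left _ (Finset.mem_image_of_mem _ he)
  have hmemt : ∀ (F : Finset ε), ∀ e ∈ F, tail e ∈ labVerts head tail F := fun F e he =>
    Finset.mem_union_right _ (Finset.mem_image_of_mem _ he)
  have step : ∀ a b : V, labAdj head tail (E₁ ∩ E₂) a b → θ₁ a - θ₂ a = θ₁ b - θ₂ b := by
    rintro a b ⟨e, he, h | h⟩ <;>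
    · obtain ⟨he1, he2⟩ := Finset.mem_inter.mp he
      have q := (hθ₁ e he1).symm.trans (hθ₂ e he2)
      obtain ⟨rfl, rfl⟩ := h
      rw [sub_eq_sub_iff_sub_eq_sub] at q
      first
        | exact q
        | exact q.symm
  have key : ∀ v ∈ S, θ₁ v - θ₂ v = θ₁ u₀ - θ₂ u₀ := by
    intro v hv
    have hrt := hconn u₀ hu₀ v hv
    clear hv
    induction hrt with
    | refl => rfl
    | tail _ hadj ih => exact (step _ _ hadj).symm.trans ih
  apply hu
  refine ⟨fun v => if v ∈ labVerts head tail E₁ then θ₁ v else θ₂ v + (θ₁ u₀ - θ₂ u₀), ?_⟩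
  intro e he
  rcases Finset.mem_union.mp he with he1 | he2
  all_goals dsimp only
  · rw [if_pos (hmemh _ _ he1), if_pos (hmemt _ _ he1)]
    exact hθ₁ e he1
  · have hh2 : head e ∈ labVerts head tail E₂ := hmemh _ _ he2
    have ht2 : tail e ∈ labVerts head tail E₂ := hmemt _ _ he2
    by_cases hh1 : head e ∈ labVerts head tail E₁ <;>
      by_cases ht1 : tail e ∈ labVerts head tail E₁ <;>
      simp only [if_pos, if_neg, hh1, ht1, if_true, if_false] <;>
      rw [hθ₂ e he2]
    · have kh := key _ (Finset.mem_inter.mpr ⟨hh1, hh2⟩)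
      have kt := key _ (Finset.mem_inter.mpr ⟨ht1, ht2⟩)
      rw [sub_eq_sub_iff_sub_eq_sub] at kh kt
      rw [sub_eq_iff_eq_add] at kh kt
      rw [kh, kt]; abel
    · have kh := key _ (Finset.mem_inter.mpr ⟨hh1, hh2⟩)
      rw [sub_eq_sub_iff_sub_eq_sub, sub_eq_iff_eq_add] at kh
      rw [kh]; abel
    · have kt := key _ (Finset.mem_inter.mpr ⟨ht1, ht2⟩)
      rw [sub_eq_sub_iff_sub_eq_sub, sub_eq_iff_eq_add] at kt
      rw [kt]; abel
    · abel
end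

section
/- Let (G, ψ) be a Γ-labeled graph with finite vertex set V and edge set E satisfying: (i) |E| = 2|V| − 1, (ii) every proper nonempty subset F ⊊ E satisfies |F| ≤ 2|V(F)| − 2, and (iii) every nonempty balanced F ⊆ E satisfies |F| ≤ 2|V(F)| − 3 (i.e., G is an unbalanced rigidity circuit). Then the underlying graph G is 2-connected. -/
open Finset

/-- Adjacency avoiding a deleted vertex `bad`. -/
def adjOff {V ε : Type*} (head tail : ε → V) (bad u w : V) : Prop :=
  ∃ e : ε, head e ≠ bad ∧ tail e ≠ bad ∧
    ((head e = u ∧ tail e = w) ∨ (head e = w ∧ tail e = u))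

/-- Adjacency in the whole graph. -/
def adjAll {V ε : Type*} (head tail : ε → V) (u w : V) : Prop :=
  ∃ e : ε, (head e = u ∧ tail e = w) ∨ (head e = w ∧ tail e = u)

lemma mem_labVerts {V ε : Type*} [DecidableEq V] [DecidableEq ε]
    (head tail : ε → V) {F : Finset ε} {x : V} :
    x ∈ labVerts head tail F ↔ ∃ e ∈ F, head e = x ∨ tail e = x := by
  constructor
  · intro h
    rcases mem_union.1 h with h | h
    · rcases mem_image.1 h with ⟨e, he, hx⟩; exact ⟨e, he, Or.inl hx⟩
    · rcases mem_image.1 h with ⟨e, he, hx⟩; exact ⟨e, he, Or.inr hx⟩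
  · rintro ⟨e, he, h | h⟩
    · exact mem_union_left _ (mem_image.2 ⟨e, he, h⟩)
    · exact mem_union_right _ (mem_image.2 ⟨e, he, h⟩)

/-- Core counting contradiction: the edge set cannot be split into two nonempty parts
whose vertex sets meet in at most one vertex. -/
lemma core_count {V ε : Type*} [Fintype V] [Fintype ε] [DecidableEq V] [DecidableEq ε]
    (head tail : ε → V)
    (hcount : Fintype.card ε = 2 * Fintype.card V - 1)
    (hsub : ∀ F : Finset ε, F.Nonempty → F ⊂ univ →
      F.card ≤ 2 * (labVerts head tail F).card - 2)
    {S : Finset ε} (hS : S.Nonempty) (hT : (univ \ S).Nonempty)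
    (hcap : (labVerts head tail S ∩ labVerts head tail (univ \ S)).card ≤ 1) :
    False := by
  set T := univ \ S with hTdef
  obtain ⟨e, he⟩ := hS
  obtain ⟨f, hf⟩ := hT
  have hfS : f ∉ S := (mem_sdiff.1 hf).2
  have heT : e ∉ T := by simp [hTdef, he]
  have hSss : S ⊂ univ := Finset.ssubset_univ_iff.2 (fun h => hfS (h ▸ mem_univ f))
  have hTss : T ⊂ univ := Finset.ssubset_univ_iff.2 (fun h => heT (h ▸ mem_univ e))
  have h1 := hsub S ⟨e, he⟩ hSss
  have h2 := hsub T ⟨f, hf⟩ hTss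
  have ha : 1 ≤ (labVerts head tail S).card :=
    card_pos.2 ⟨head e, (mem_labVerts head tail).2 ⟨e, he, Or.inl rfl⟩⟩
  have hb : 1 ≤ (labVerts head tail T).card :=
    card_pos.2 ⟨head f, (mem_labVerts head tail).2 ⟨f, hf, Or.inl rfl⟩⟩
  have hun : (labVerts head tail S ∪ labVerts head tail T).card ≤ Fintype.card V := by
    calc (labVerts head tail S ∪ labVerts head tail T).card
        ≤ (univ : Finset V).card := card_le_card (subset_univ _)
      _ = Fintype.card V := card_univ
  have hie : (labVerts head tail S ∪ labVerts head tail T).card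
      + (labVerts head tail S ∩ labVerts head tail T).card
      = (labVerts head tail S).card + (labVerts head tail T).card :=
    Finset.card_union_add_card_inter _ _
  have hst : T.card + S.card = Fintype.card ε := by
    rw [hTdef, Finset.card_sdiff_add_card_eq_card (subset_univ S), card_univ]
  omega

/-- If `|V| ≥ 2`, every vertex is incident to some edge. -/
lemma incident {V ε : Type*} [Fintype V] [Fintype ε] [DecidableEq V] [DecidableEq ε]
    (head tail : ε → V)
    (hcount : Fintype.card ε = 2 * Fintype.card V - 1)
    (hsub : ∀ F : Finset ε, F.Nonempty → F ⊂ univ →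
      F.card ≤ 2 * (labVerts head tail F).card - 2)
    (hn : 2 ≤ Fintype.card V) (x : V) :
    ∃ e : ε, head e = x ∨ tail e = x := by
  by_contra h
  push_neg at h
  have hε : 0 < Fintype.card ε := by omega
  obtain ⟨e0⟩ := Fintype.card_pos_iff.1 hε
  set F := (univ : Finset ε).erase e0 with hF
  have hFcard : F.card = Fintype.card ε - 1 := by
    rw [hF, card_erase_of_mem (mem_univ e0), card_univ]
  have hFne : F.Nonempty := card_pos.1 (by omega)
  have hFss : F ⊂ univ := erase_ssubset (mem_univ e0)
  have h1 := hsub F hFne hFss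
  have hsubV : labVerts head tail F ⊆ (univ : Finset V).erase x := by
    intro y hy
    rcases (mem_labVerts head tail).1 hy with ⟨e, _, h' | h'⟩
    · exact mem_erase.2 ⟨h' ▸ (h e).1, mem_univ y⟩
    · exact mem_erase.2 ⟨h' ▸ (h e).2, mem_univ y⟩
  have hcV : (labVerts head tail F).card ≤ Fintype.card V - 1 := by
    have := card_le_card hsubV
    rwa [card_erase_of_mem (mem_univ x), card_univ] at this
  omega

/-- part of Lemma 5.7 / lem:7. An unbalanced rigidity circuit is
2-connected: the graph is connected, and deleting any single vertex leaves it connected. -/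
theorem unbalanced_circuit_two_connected
    {V ε Γ : Type*} [Fintype V] [Fintype ε] [DecidableEq V] [DecidableEq ε] [AddCommGroup Γ]
    (head tail : ε → V) (ψ : ε → Γ)
    (hloopless : ∀ e : ε, head e ≠ tail e)
    (hcount : Fintype.card ε = 2 * Fintype.card V - 1)
    (hsub : ∀ F : Finset ε, F.Nonempty → F ⊂ univ →
      F.card ≤ 2 * (labVerts head tail F).card - 2)
    (hbal : ∀ F : Finset ε, F.Nonempty → IsBalanced head tail ψ F →
      F.card ≤ 2 * (labVerts head tail F).card - 3) :
    (∀ u w : V, Relation.ReflTransGen (adjAll head tail) u w) ∧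
    ∀ v u w : V, u ≠ v → w ≠ v →
      Relation.ReflTransGen (adjOff head tail v) u w := by
  classical
  constructor
  · -- connectivity
    intro u w
    by_contra hcon
    have huw : u ≠ w := by rintro rfl; exact hcon Relation.ReflTransGen.refl
    have hn : 2 ≤ Fintype.card V := Fintype.one_lt_card_iff.2 ⟨u, w, huw⟩
    set C : Finset V :=
      univ.filter (fun x => Relation.ReflTransGen (adjAll head tail) u x) with hC
    have hmemC : ∀ x, x ∈ C ↔ Relation.ReflTransGen (adjAll head tail) u x := by
      intro x; simp [hC]
    have hstep : ∀ e : ε, head e ∈ C → tail e ∈ C := by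
      intro e he
      exact (hmemC _).2 (((hmemC _).1 he).tail ⟨e, Or.inl ⟨rfl, rfl⟩⟩)
    have hstep' : ∀ e : ε, tail e ∈ C → head e ∈ C := by
      intro e he
      exact (hmemC _).2 (((hmemC _).1 he).tail ⟨e, Or.inr ⟨rfl, rfl⟩⟩)
    set S : Finset ε := univ.filter (fun e => head e ∈ C ∧ tail e ∈ C) with hSdef
    have hmemS : ∀ e, e ∈ S ↔ head e ∈ C ∧ tail e ∈ C := by
      intro e; simp [hSdef]
    have hS : S.Nonempty := by
      obtain ⟨e, he⟩ := incident head tail hcount hsub hn u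
      have huC : u ∈ C := (hmemC u).2 Relation.ReflTransGen.refl
      rcases he with he | he
      · exact ⟨e, (hmemS e).2 ⟨he ▸ huC, hstep e (he ▸ huC)⟩⟩
      · exact ⟨e, (hmemS e).2 ⟨hstep' e (he ▸ huC), he ▸ huC⟩⟩
    have hT : (univ \ S).Nonempty := by
      obtain ⟨f, hf⟩ := incident head tail hcount hsub hn w
      refine ⟨f, mem_sdiff.2 ⟨mem_univ f, fun hfS => ?_⟩⟩
      have := (hmemS f).1 hfS
      rcases hf with hf | hf
      · exact hcon ((hmemC w).1 (hf ▸ this.1))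
      · exact hcon ((hmemC w).1 (hf ▸ this.2))
    refine core_count head tail hcount hsub hS hT ?_
    have hsub1 : labVerts head tail S ⊆ C := by
      intro y hy
      rcases (mem_labVerts head tail).1 hy with ⟨e, he, h' | h'⟩
      · exact h' ▸ ((hmemS e).1 he).1
      · exact h' ▸ ((hmemS e).1 he).2
    have hsub2 : labVerts head tail (univ \ S) ⊆ univ \ C := by
      intro y hy
      rcases (mem_labVerts head tail).1 hy with ⟨e, he, h' | h'⟩ <;>
        refine mem_sdiff.2 ⟨mem_univ y, fun hyC => ?_⟩ <;>
        have heS := (mem_sdiff.1 he).2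
      · exact heS ((hmemS e).2 ⟨h' ▸ hyC, hstep e (h' ▸ hyC)⟩)
      · exact heS ((hmemS e).2 ⟨hstep' e (h' ▸ hyC), h' ▸ hyC⟩)
    have : labVerts head tail S ∩ labVerts head tail (univ \ S) ⊆ ∅ := by
      intro y hy
      have h1 := hsub1 (mem_inter.1 hy).1
      have h2 := (mem_sdiff.1 (hsub2 (mem_inter.1 hy).2)).2
      exact absurd h1 h2
    exact le_trans (card_le_card this) (by simp)
  · -- 2-connectivity
    intro v u w hu hw
    by_contra hcon
    have huw : u ≠ w := by rintro rfl; exact hcon Relation.ReflTransGen.refl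
    have hn : 2 ≤ Fintype.card V := Fintype.one_lt_card_iff.2 ⟨u, w, huw⟩
    set C : Finset V :=
      univ.filter (fun x => Relation.ReflTransGen (adjOff head tail v) u x) with hC
    have hmemC : ∀ x, x ∈ C ↔ Relation.ReflTransGen (adjOff head tail v) u x := by
      intro x; simp [hC]
    have hCv : ∀ x ∈ C, x ≠ v := by
      intro x hx
      rcases ((hmemC x).1 hx).cases_tail with h | ⟨c, _, e, he1, he2, h | h⟩
      · exact h ▸ hu
      · exact h.2 ▸ he2
      · exact h.1 ▸ he1
    set D : Finset V := insert v C with hD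
    have hstep : ∀ e : ε, head e ∈ C → tail e ∈ D := by
      intro e he
      by_cases ht : tail e = v
      · exact ht ▸ mem_insert_self v C
      · refine mem_insert_of_mem ((hmemC _).2 (((hmemC _).1 he).tail
          ⟨e, hCv _ he, ht, Or.inl ⟨rfl, rfl⟩⟩))
    have hstep' : ∀ e : ε, tail e ∈ C → head e ∈ D := by
      intro e he
      by_cases ht : head e = v
      · exact ht ▸ mem_insert_self v C
      · refine mem_insert_of_mem ((hmemC _).2 (((hmemC _).1 he).tail
          ⟨e, ht, hCv _ he, Or.inr ⟨rfl, rfl⟩⟩))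
    set S : Finset ε := univ.filter (fun e => head e ∈ D ∧ tail e ∈ D) with hSdef
    have hmemS : ∀ e, e ∈ S ↔ head e ∈ D ∧ tail e ∈ D := by
      intro e; simp [hSdef]
    have hmemD : ∀ x, x ∈ D ↔ x = v ∨ x ∈ C := by intro x; simp [hD]
    have huC : u ∈ C := (hmemC u).2 Relation.ReflTransGen.refl
    have hS : S.Nonempty := by
      obtain ⟨e, he⟩ := incident head tail hcount hsub hn u
      rcases he with he | he
      · exact ⟨e, (hmemS e).2 ⟨mem_insert_of_mem (he ▸ huC), hstep e (he ▸ huC)⟩⟩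
      · exact ⟨e, (hmemS e).2 ⟨hstep' e (he ▸ huC), mem_insert_of_mem (he ▸ huC)⟩⟩
    have hwD : w ∉ D := by
      intro hwD
      rcases (hmemD w).1 hwD with h | h
      · exact hw h
      · exact hcon ((hmemC w).1 h)
    have hT : (univ \ S).Nonempty := by
      obtain ⟨f, hf⟩ := incident head tail hcount hsub hn w
      refine ⟨f, mem_sdiff.2 ⟨mem_univ f, fun hfS => ?_⟩⟩
      have := (hmemS f).1 hfS
      rcases hf with hf | hf
      · exact hwD (hf ▸ this.1)
      · exact hwD (hf ▸ this.2)
    refine core_count head tail hcount hsub hS hT ?_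
    have hsub1 : labVerts head tail S ⊆ D := by
      intro y hy
      rcases (mem_labVerts head tail).1 hy with ⟨e, he, h' | h'⟩
      · exact h' ▸ ((hmemS e).1 he).1
      · exact h' ▸ ((hmemS e).1 he).2
    have hsub2 : labVerts head tail (univ \ S) ⊆ univ \ C := by
      intro y hy
      rcases (mem_labVerts head tail).1 hy with ⟨e, he, h' | h'⟩ <;>
        refine mem_sdiff.2 ⟨mem_univ y, fun hyC => ?_⟩ <;>
        have heS := (mem_sdiff.1 he).2
      · exact heS ((hmemS e).2 ⟨mem_insert_of_mem (h' ▸ hyC), hstep e (h' ▸ hyC)⟩)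
      · exact heS ((hmemS e).2 ⟨hstep' e (h' ▸ hyC), mem_insert_of_mem (h' ▸ hyC)⟩)
    have hinter : labVerts head tail S ∩ labVerts head tail (univ \ S) ⊆ {v} := by
      intro y hy
      have h1 := hsub1 (mem_inter.1 hy).1
      have h2 := (mem_sdiff.1 (hsub2 (mem_inter.1 hy).2)).2
      rcases (hmemD y).1 h1 with h | h
      · exact mem_singleton.2 h
      · exact absurd h h2
    calc (labVerts head tail S ∩ labVerts head tail (univ \ S)).card
        ≤ ({v} : Finset V).card := card_le_card hinter
      _ = 1 := card_singleton v
end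

section
/- Let G₁ = (V₁, E₁) and G₂ = (V₂, E₂) be balanced Γ-labeled graphs with |V₁ ∩ V₂| ≥ 2 such that G₁ ∪ G₂ is balanced and each G_i is rigid, i.e., r₂(E_i) = 2|V_i| − 3 in the count matroid. Then G₁ ∪ G₂ is rigid: r₂(E₁ ∪ E₂) = 2|V₁ ∪ V₂| − 3. -/
open Finset

/-- Independence in the periodic count matroid `R₂(V,Γ)`:
every nonempty subset `F'` satisfies `|F'| ≤ 2|V(F')| − 2`, and every nonempty balanced
subset `F'` satisfies `|F'| ≤ 2|V(F')| − 3`. -/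
def CountIndep {V ε Γ : Type*} [DecidableEq V] [DecidableEq ε] [AddCommGroup Γ]
    (head tail : ε → V) (ψ : ε → Γ) (F : Finset ε) : Prop :=
  (∀ F' ⊆ F, F'.Nonempty → F'.card ≤ 2 * (labVerts head tail F').card - 2) ∧
  (∀ F' ⊆ F, F'.Nonempty → IsBalanced head tail ψ F' →
    F'.card ≤ 2 * (labVerts head tail F').card - 3)

/-- The rank function `r₂` of the periodic count matroid: the maximum cardinality of an
independent subset of `E`. -/
noncomputable def rank2 {V ε Γ : Type*} [DecidableEq V] [DecidableEq ε] [AddCommGroup Γ]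
    (head tail : ε → V) (ψ : ε → Γ) (E : Finset ε) : ℕ := by
  classical
  exact (E.powerset.filter (CountIndep head tail ψ)).sup Finset.card

section SparseTheory

variable {V η : Type*} [DecidableEq V] [DecidableEq η] (head tail : η → V)

/-- (2,3)-sparsity, phrased without truncated subtraction. -/
def Sp (F : Finset η) : Prop :=
  ∀ F' ⊆ F, F'.Nonempty → F'.card + 3 ≤ 2 * (labVerts head tail F').card

variable {head tail}

lemma head_mem_labVerts {F : Finset η} {e : η} (he : e ∈ F) :
    head e ∈ labVerts head tail F :=
  mem_union_left _ (mem_image_of_mem _ he)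

lemma tail_mem_labVerts {F : Finset η} {e : η} (he : e ∈ F) :
    tail e ∈ labVerts head tail F :=
  mem_union_right _ (mem_image_of_mem _ he)

lemma mem_labVerts_elim {F : Finset η} {v : V} (hv : v ∈ labVerts head tail F) :
    ∃ e ∈ F, head e = v ∨ tail e = v := by
  rcases mem_union.1 hv with h | h
  · rcases mem_image.1 h with ⟨e, he, hev⟩; exact ⟨e, he, Or.inl hev⟩
  · rcases mem_image.1 h with ⟨e, he, hev⟩; exact ⟨e, he, Or.inr hev⟩

lemma labVerts_mono {F G : Finset η} (h : F ⊆ G) :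
    labVerts head tail F ⊆ labVerts head tail G := by
  intro v hv
  rcases mem_labVerts_elim hv with ⟨e, he, h' | h'⟩
  · exact h' ▸ head_mem_labVerts (h he)
  · exact h' ▸ tail_mem_labVerts (h he)

lemma Sp.subset {F G : Finset η} (hF : Sp head tail F) (h : G ⊆ F) : Sp head tail G :=
  fun F' hF' => hF F' (hF'.trans h)

lemma Sp.empty : Sp head tail (∅ : Finset η) := by
  intro F' hF' hne
  exact absurd (subset_empty.1 hF') hne.ne_empty

lemma Sp.nonloop {F : Finset η} (hF : Sp head tail F) {e : η} (he : e ∈ F) :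
    head e ≠ tail e := by
  intro hcon
  have h1 := hF {e} (singleton_subset_iff.2 he) (singleton_nonempty e)
  have : labVerts head tail {e} = {head e} := by
    simp [labVerts, ← hcon]
  rw [this] at h1
  simp at h1

variable (head tail)

/-- The edges of `F` with both endpoints in `X`. -/
def eIn (F : Finset η) (X : Finset V) : Finset η :=
  F.filter (fun e => head e ∈ X ∧ tail e ∈ X)

def Tight (F : Finset η) (X : Finset V) : Prop :=
  2 ≤ X.card ∧ (eIn head tail F X).card + 3 = 2 * X.card

def MaxTight (F : Finset η) (X : Finset V) : Prop :=
  Tight head tail F X ∧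
  ∀ Y, Tight head tail F Y → 2 ≤ (X ∩ Y).card → Y ⊆ X

variable {head tail}

lemma eIn_subset (F : Finset η) (X : Finset V) : eIn head tail F X ⊆ F :=
  filter_subset _ _

lemma mem_eIn {F : Finset η} {X : Finset V} {e : η} :
    e ∈ eIn head tail F X ↔ e ∈ F ∧ head e ∈ X ∧ tail e ∈ X := by
  simp [eIn]

lemma labVerts_eIn_subset (F : Finset η) (X : Finset V) :
    labVerts head tail (eIn head tail F X) ⊆ X := by
  intro v hv
  rcases mem_labVerts_elim hv with ⟨e, he, h' | h'⟩ <;>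
    rcases mem_eIn.1 he with ⟨_, h1, h2⟩
  · exact h' ▸ h1
  · exact h' ▸ h2

lemma eIn_card_le {F : Finset η} (hF : Sp head tail F) {X : Finset V} (hX : 2 ≤ X.card) :
    (eIn head tail F X).card + 3 ≤ 2 * X.card := by
  rcases (eIn head tail F X).eq_empty_or_nonempty with h | h
  · rw [h]; simp; omega
  · calc (eIn head tail F X).card + 3
        ≤ 2 * (labVerts head tail (eIn head tail F X)).card :=
          hF _ (eIn_subset F X) h
      _ ≤ 2 * X.card := by
          have := card_le_card (labVerts_eIn_subset (head := head) (tail := tail) F X)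
          omega

lemma tight_union {F : Finset η} (hF : Sp head tail F) {X Y : Finset V}
    (hX : Tight head tail F X) (hY : Tight head tail F Y)
    (hXY : 2 ≤ (X ∩ Y).card) : Tight head tail F (X ∪ Y) := by
  have hsub : eIn head tail F X ∪ eIn head tail F Y ⊆ eIn head tail F (X ∪ Y) := by
    intro e he
    rcases mem_union.1 he with h | h <;> rcases mem_eIn.1 h with ⟨h1, h2, h3⟩ <;>
      exact mem_eIn.2 ⟨h1, by simp [h2, h3]⟩
  have hinter : eIn head tail F X ∩ eIn head tail F Y = eIn head tail F (X ∩ Y) := by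
    ext e; simp only [mem_inter, mem_eIn]; tauto
  have h1 := card_union_add_card_inter (eIn head tail F X) (eIn head tail F Y)
  have h2 := card_le_card hsub
  have h3 : 2 ≤ (X ∪ Y).card :=
    le_trans hX.1 (card_le_card subset_union_left)
  have h4 := eIn_card_le hF h3
  have h5 := eIn_card_le hF hXY
  have h6 := card_union_add_card_inter X Y
  have h7 := hX.2
  have h8 := hY.2
  rw [hinter] at h1
  exact ⟨h3, by omega⟩

lemma tight_subset_labVerts {F : Finset η} (hF : Sp head tail F) {X : Finset V}
    (hX : Tight head tail F X) : X ⊆ labVerts head tail F := by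
  intro w hw
  by_contra hnw
  by_cases h3 : 3 ≤ X.card
  · have heq : eIn head tail F X = eIn head tail F (X.erase w) := by
      ext e
      simp only [mem_eIn]
      constructor
      · rintro ⟨h1, h2, h4⟩
        refine ⟨h1, mem_erase.2 ⟨?_, h2⟩, mem_erase.2 ⟨?_, h4⟩⟩
        · intro hc; exact hnw (hc ▸ head_mem_labVerts h1)
        · intro hc; exact hnw (hc ▸ tail_mem_labVerts h1)
      · rintro ⟨h1, h2, h4⟩
        exact ⟨h1, mem_of_mem_erase h2, mem_of_mem_erase h4⟩
    have hcard : (X.erase w).card = X.card - 1 := card_erase_of_mem hw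
    have h2 : 2 ≤ (X.erase w).card := by omega
    have := eIn_card_le hF h2
    rw [← heq] at this
    have := hX.2
    omega
  · -- X.card = 2
    have hX2 : X.card = 2 := by have := hX.1; omega
    have hc1 : (eIn head tail F X).card = 1 := by have := hX.2; omega
    obtain ⟨e, he⟩ := card_eq_one.1 hc1
    have heX : e ∈ eIn head tail F X := by rw [he]; exact mem_singleton_self e
    rcases mem_eIn.1 heX with ⟨h1, h2, h4⟩
    have hne := hF.nonloop h1
    have hpair : ({head e, tail e} : Finset V) ⊆ X := by
      intro x hx; rcases mem_insert.1 hx with h | h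
      · exact h ▸ h2
      · exact (mem_singleton.1 h) ▸ h4
    have : ({head e, tail e} : Finset V) = X :=
      eq_of_subset_of_card_le hpair (by rw [card_pair hne]; omega)
    rw [← this] at hw
    rcases mem_insert.1 hw with h | h
    · exact hnw (h ▸ head_mem_labVerts h1)
    · exact hnw ((mem_singleton.1 h) ▸ tail_mem_labVerts h1)

lemma exists_maxTight {F : Finset η} (hF : Sp head tail F) {X₀ : Finset V}
    (hX₀ : Tight head tail F X₀) :
    ∃ M, MaxTight head tail F M ∧ X₀ ⊆ M := by
  classical
  set A := (labVerts head tail F).powerset.filter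
      (fun Y => Tight head tail F Y ∧ X₀ ⊆ Y) with hA
  have hX₀A : X₀ ∈ A := by
    rw [hA, mem_filter, mem_powerset]
    exact ⟨tight_subset_labVerts hF hX₀, hX₀, Subset.refl _⟩
  obtain ⟨M, hM, hMmax⟩ := A.exists_max_image card ⟨X₀, hX₀A⟩
  rw [hA, mem_filter, mem_powerset] at hM
  refine ⟨M, ⟨hM.2.1, ?_⟩, hM.2.2⟩
  intro Y hY hYM
  have hMY : Tight head tail F (M ∪ Y) := tight_union hF hM.2.1 hY hYM
  have hMYA : M ∪ Y ∈ A := by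
    rw [hA, mem_filter, mem_powerset]
    exact ⟨tight_subset_labVerts hF hMY, hMY, hM.2.2.trans subset_union_left⟩
  have := hMmax _ hMYA
  have heq : M ∪ Y = M := eq_of_subset_of_card_le subset_union_left this |>.symm
  exact heq ▸ subset_union_right

lemma maxTight_eq {F : Finset η} {X Y : Finset V}
    (hX : MaxTight head tail F X) (hY : MaxTight head tail F Y)
    (h : 2 ≤ (X ∩ Y).card) : X = Y := by
  have h' : 2 ≤ (Y ∩ X).card := by rwa [inter_comm]
  exact Subset.antisymm (hY.2 X hX.1 h') (hX.2 Y hY.1 h)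

lemma pair_tight {F : Finset η} (hF : Sp head tail F) {e : η} (he : e ∈ F) :
    Tight head tail F {head e, tail e} := by
  have hne := hF.nonloop he
  have hcard : ({head e, tail e} : Finset V).card = 2 := card_pair hne
  have h1 : e ∈ eIn head tail F {head e, tail e} :=
    mem_eIn.2 ⟨he, by simp, by simp⟩
  have h2 : 1 ≤ (eIn head tail F {head e, tail e}).card := card_pos.2 ⟨e, h1⟩
  have h3 := eIn_card_le hF (le_of_eq hcard.symm)
  exact ⟨le_of_eq hcard.symm, by omega⟩

lemma blocked_tight {F : Finset η} (hF : Sp head tail F) {e : η}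
    (hne : head e ≠ tail e) (hb : ¬ Sp head tail (insert e F)) :
    ∃ X, Tight head tail F X ∧ head e ∈ X ∧ tail e ∈ X := by
  by_cases heF : e ∈ F
  · rw [insert_eq_self.2 heF] at hb; exact absurd hF hb
  simp only [Sp, not_forall] at hb
  obtain ⟨F'', hsub, hne'', hgt⟩ := hb
  push_neg at hgt
  have heF'' : e ∈ F'' := by
    by_contra h
    have : F'' ⊆ F := by
      intro x hx
      rcases mem_insert.1 (hsub hx) with h' | h'
      · exact absurd (h' ▸ hx) h
      · exact h'
    exact absurd (hF F'' this hne'') (by omega)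
  refine ⟨labVerts head tail F'', ⟨?_, ?_⟩, head_mem_labVerts heF'', tail_mem_labVerts heF''⟩
  · have : ({head e, tail e} : Finset V) ⊆ labVerts head tail F'' := by
      intro x hx; rcases mem_insert.1 hx with h | h
      · exact h ▸ head_mem_labVerts heF''
      · exact (mem_singleton.1 h) ▸ tail_mem_labVerts heF''
    calc 2 = ({head e, tail e} : Finset V).card := (card_pair hne).symm
    _ ≤ _ := card_le_card this
  · have h2 : 2 ≤ (labVerts head tail F'').card := by
      have : ({head e, tail e} : Finset V) ⊆ labVerts head tail F'' := by
        intro x hx; rcases mem_insert.1 hx with h | h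
        · exact h ▸ head_mem_labVerts heF''
        · exact (mem_singleton.1 h) ▸ tail_mem_labVerts heF''
      calc 2 = ({head e, tail e} : Finset V).card := (card_pair hne).symm
      _ ≤ _ := card_le_card this
    have hle := eIn_card_le hF h2
    have hsub' : F''.erase e ⊆ eIn head tail F (labVerts head tail F'') := by
      intro x hx
      have hxF'' : x ∈ F'' := mem_of_mem_erase hx
      have hxF : x ∈ F := by
        rcases mem_insert.1 (hsub hxF'') with h | h
        · exact absurd h (ne_of_mem_erase hx)
        · exact h
      exact mem_eIn.2 ⟨hxF, head_mem_labVerts hxF'', tail_mem_labVerts hxF''⟩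
    have hcard : (F''.erase e).card = F''.card - 1 := card_erase_of_mem heF''
    have hge := card_le_card hsub'
    have h1 : 1 ≤ F''.card := card_pos.2 hne''
    omega

theorem Sp.augment {F₁ F₂ : Finset η} (h1 : Sp head tail F₁) (h2 : Sp head tail F₂)
    (hcard : F₁.card < F₂.card) :
    ∃ e ∈ F₂, e ∉ F₁ ∧ Sp head tail (insert e F₁) := by
  classical
  by_contra hcon
  push_neg at hcon
  have key : ∀ e ∈ F₂, ∃ M, MaxTight head tail F₁ M ∧ head e ∈ M ∧ tail e ∈ M := by
    intro e he
    have hne := h2.nonloop he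
    by_cases heF₁ : e ∈ F₁
    · obtain ⟨M, hM, hsub⟩ := exists_maxTight h1 (pair_tight h1 heF₁)
      exact ⟨M, hM, hsub (by simp), hsub (by simp)⟩
    · obtain ⟨X, hX, hh, ht⟩ := blocked_tight h1 hne (hcon e he heF₁)
      obtain ⟨M, hM, hsub⟩ := exists_maxTight h1 hX
      exact ⟨M, hM, hsub hh, hsub ht⟩
  set σ : η → Finset V := fun e =>
    if he : e ∈ F₂ then (key e he).choose else ∅ with hσ
  have hσspec : ∀ e ∈ F₂, MaxTight head tail F₁ (σ e) ∧ head e ∈ σ e ∧ tail e ∈ σ e := by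
    intro e he
    rw [hσ]; simp only [dif_pos he]
    exact (key e he).choose_spec
  set t := F₂.image σ with ht
  have hfib := card_eq_sum_card_fiberwise (fun e he => mem_image_of_mem σ he : ∀ x ∈ F₂, σ x ∈ t)
  have htmax : ∀ T ∈ t, MaxTight head tail F₁ T := by
    intro T hT
    obtain ⟨e, he, hσe⟩ := mem_image.1 hT
    exact hσe ▸ (hσspec e he).1
  have hbound : ∀ T ∈ t, (F₂.filter (fun e => σ e = T)).card ≤ (eIn head tail F₁ T).card := by
    intro T hT
    obtain ⟨e₀, he₀, hσe₀⟩ := mem_image.1 hT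
    have hfibne : (F₂.filter (fun e => σ e = T)).Nonempty :=
      ⟨e₀, mem_filter.2 ⟨he₀, hσe₀⟩⟩
    have hfibsub : F₂.filter (fun e => σ e = T) ⊆ F₂ := filter_subset _ _
    have hsp := h2 _ hfibsub hfibne
    have hlv : labVerts head tail (F₂.filter (fun e => σ e = T)) ⊆ T := by
      intro v hv
      rcases mem_labVerts_elim hv with ⟨f, hf, h' | h'⟩ <;>
        rcases mem_filter.1 hf with ⟨hfF₂, hfσ⟩
      · exact h' ▸ hfσ ▸ (hσspec f hfF₂).2.1
      · exact h' ▸ hfσ ▸ (hσspec f hfF₂).2.2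
    have hTt := (htmax T hT).1.2
    have := card_le_card hlv
    omega
  have hdisj : ∀ T ∈ t, ∀ T' ∈ t, T ≠ T' →
      Disjoint (eIn head tail F₁ T) (eIn head tail F₁ T') := by
    intro T hT T' hT' hne
    rw [disjoint_left]
    intro e he he'
    rcases mem_eIn.1 he with ⟨h1e, h2e, h3e⟩
    rcases mem_eIn.1 he' with ⟨_, h2e', h3e'⟩
    have hnl := h1.nonloop h1e
    have hpair : ({head e, tail e} : Finset V) ⊆ T ∩ T' := by
      intro x hx; rcases mem_insert.1 hx with h | h
      · exact h ▸ mem_inter.2 ⟨h2e, h2e'⟩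
      · exact (mem_singleton.1 h) ▸ mem_inter.2 ⟨h3e, h3e'⟩
    have h2c : 2 ≤ (T ∩ T').card := by
      calc 2 = ({head e, tail e} : Finset V).card := (card_pair hnl).symm
      _ ≤ _ := card_le_card hpair
    exact hne (maxTight_eq (htmax T hT) (htmax T' hT') h2c)
  have hsum : ∑ T ∈ t, (eIn head tail F₁ T).card = (t.biUnion (eIn head tail F₁)).card :=
    (card_biUnion hdisj).symm
  have hbUsub : t.biUnion (eIn head tail F₁) ⊆ F₁ := by
    intro e he
    obtain ⟨T, _, heT⟩ := mem_biUnion.1 he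
    exact eIn_subset F₁ T heT
  have hfinal : F₂.card ≤ F₁.card := by
    calc F₂.card = ∑ T ∈ t, (F₂.filter (fun e => σ e = T)).card := hfib
    _ ≤ ∑ T ∈ t, (eIn head tail F₁ T).card := Finset.sum_le_sum hbound
    _ = (t.biUnion (eIn head tail F₁)).card := hsum
    _ ≤ F₁.card := card_le_card hbUsub
  omega

end SparseTheory

section MoreLabVerts

variable {V η : Type*} [DecidableEq V] [DecidableEq η] {head tail : η → V}

lemma labVerts_union (F G : Finset η) :
    labVerts head tail (F ∪ G) = labVerts head tail F ∪ labVerts head tail G := by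
  unfold labVerts
  rw [image_union, image_union, union_union_union_comm]

end MoreLabVerts
section Matroid

variable {V η : Type*} [DecidableEq V] [DecidableEq η] {head tail : η → V}

set_option linter.unusedSectionVars false

lemma exists_maximal_extension {G F : Finset η} (hFG : F ⊆ G) (hF : Sp head tail F) :
    ∃ M, F ⊆ M ∧ M ⊆ G ∧ Sp head tail M ∧
      ∀ e ∈ G, e ∉ M → ¬ Sp head tail (insert e M) := by
  classical
  set A := G.powerset.filter (fun H => Sp head tail H ∧ F ⊆ H) with hA
  have hFA : F ∈ A := by
    rw [hA, mem_filter, mem_powerset]; exact ⟨hFG, hF, Subset.refl _⟩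
  obtain ⟨M, hM, hMmax⟩ := A.exists_max_image card ⟨F, hFA⟩
  rw [hA, mem_filter, mem_powerset] at hM
  refine ⟨M, hM.2.2, hM.1, hM.2.1, ?_⟩
  intro e heG heM hsp
  have : insert e M ∈ A := by
    rw [hA, mem_filter, mem_powerset]
    exact ⟨insert_subset heG hM.1, hsp, hM.2.2.trans (subset_insert _ _)⟩
  have := hMmax _ this
  rw [card_insert_of_notMem heM] at this
  omega

lemma card_le_of_maximal {G M : Finset η} (hs : Sp head tail M) (hsub : M ⊆ G)
    (hmax : ∀ e ∈ G, e ∉ M → ¬ Sp head tail (insert e M)) :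
    ∀ H ⊆ G, Sp head tail H → H.card ≤ M.card := by
  intro H hHG hH
  by_contra h
  push_neg at h
  obtain ⟨e, heH, heM, hsp⟩ := hs.augment hH h
  exact hmax e (hHG heH) heM hsp

lemma exists_sparse_avoid {G A : Finset η} {p : η} (hA : A ⊆ G) (hpA : p ∉ A)
    (hblock : ∀ B₀ ⊆ A, Sp head tail B₀ →
      (∀ e ∈ A, e ∉ B₀ → ¬ Sp head tail (insert e B₀)) →
      ¬ Sp head tail (insert p B₀))
    {F : Finset η} (hF : F ⊆ G) (hFs : Sp head tail F) :
    ∃ F', F' ⊆ G.erase p ∧ Sp head tail F' ∧ F.card ≤ F'.card := by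
  obtain ⟨B₀, -, hB₀A, hB₀s, hB₀max⟩ :=
    exists_maximal_extension (empty_subset A) (Sp.empty (head := head) (tail := tail))
  obtain ⟨M, hB₀M, hMG, hMs, hMmax⟩ := exists_maximal_extension (hB₀A.trans hA) hB₀s
  have hpM : p ∉ M := by
    intro hpM
    have : insert p B₀ ⊆ M := insert_subset hpM hB₀M
    exact hblock B₀ hB₀A hB₀s hB₀max (hMs.subset this)
  refine ⟨M, ?_, hMs, card_le_of_maximal hMs hMG hMmax F hF hFs⟩
  intro x hx
  exact mem_erase.2 ⟨fun hc => hpM (hc ▸ hx), hMG hx⟩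

lemma exists_sparse_in_base (E : Finset η) :
    ∀ P : Finset η,
      (∀ p ∈ P, p ∉ E → ∃ A, A ⊆ E ∧ p ∉ A ∧
        (∀ B₀ ⊆ A, Sp head tail B₀ →
          (∀ e ∈ A, e ∉ B₀ → ¬ Sp head tail (insert e B₀)) →
          ¬ Sp head tail (insert p B₀))) →
      ∀ F ⊆ E ∪ P, Sp head tail F → ∃ F', F' ⊆ E ∧ Sp head tail F' ∧ F.card ≤ F'.card := by
  classical
  intro P
  induction P using Finset.induction_on with
  | empty =>
      intro _ F hF hFs
      exact ⟨F, by simpa using hF, hFs, le_refl _⟩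
  | @insert p P hpP ih =>
      intro hP F hF hFs
      by_cases hpE : p ∈ E
      · apply ih
        · intro q hq hqE
          exact hP q (mem_insert_of_mem hq) hqE
        · intro x hx
          rcases mem_union.1 (hF hx) with h | h
          · exact mem_union_left _ h
          · rcases mem_insert.1 h with h' | h'
            · exact mem_union_left _ (h' ▸ hpE)
            · exact mem_union_right _ h'
        · exact hFs
      · obtain ⟨A, hAE, hpA, hblock⟩ := hP p (mem_insert_self p P) hpE
        obtain ⟨F'', hF''sub, hF''s, hcard⟩ :=
          exists_sparse_avoid (hAE.trans subset_union_left) hpA hblock hF hFs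
        have hF''EP : F'' ⊆ E ∪ P := by
          intro x hx
          have hx' := mem_erase.1 (hF''sub hx)
          rcases mem_union.1 hx'.2 with h | h
          · exact mem_union_left _ h
          · rcases mem_insert.1 h with h' | h'
            · exact absurd h' hx'.1
            · exact mem_union_right _ h'
        obtain ⟨F', hF', hF's, hcard'⟩ := ih
          (fun q hq hqE => hP q (mem_insert_of_mem hq) hqE) F'' hF''EP hF''s
        exact ⟨F', hF', hF's, le_trans hcard hcard'⟩

end Matroid

section Transfer

variable {V η η' : Type*} [DecidableEq V] [DecidableEq η] [DecidableEq η']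
  {head tail : η → V} {head' tail' : η' → V} (f : η ↪ η')
  (hh : ∀ e, head' (f e) = head e) (ht : ∀ e, tail' (f e) = tail e)

set_option linter.unusedSectionVars false

include hh ht

lemma labVerts_map (F : Finset η) :
    labVerts head' tail' (F.map f) = labVerts head tail F := by
  unfold labVerts
  rw [map_eq_image, image_image, image_image]
  congr 1 <;> apply image_congr <;> intro x _ <;> simp [hh, ht]

lemma Sp_map {F : Finset η} : Sp head' tail' (F.map f) ↔ Sp head tail F := by
  constructor
  · intro hsp F' hF' hne
    have h1 := hsp (F'.map f) (map_subset_map.2 hF') hne.map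
    rwa [card_map, labVerts_map f hh ht] at h1
  · intro hsp F'' hF'' hne
    classical
    set F₀ := F.filter (fun e => f e ∈ F'') with hF₀
    have hmap : F₀.map f = F'' := by
      apply Subset.antisymm
      · intro x hx
        obtain ⟨e, he, hex⟩ := mem_map.1 hx
        exact hex ▸ (mem_filter.1 he).2
      · intro x hx
        obtain ⟨e, he, hex⟩ := mem_map.1 (hF'' hx)
        exact mem_map.2 ⟨e, mem_filter.2 ⟨he, hex ▸ hx⟩, hex⟩
    have hne₀ : F₀.Nonempty := by
      obtain ⟨x, hx⟩ := hne
      rw [← hmap] at hx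
      obtain ⟨e, he, -⟩ := mem_map.1 hx
      exact ⟨e, he⟩
    have := hsp F₀ (filter_subset _ _) hne₀
    rw [← hmap, card_map, labVerts_map f hh ht]
    exact this

end Transfer

section Transfer2

variable {η η' : Type*} [DecidableEq η] [DecidableEq η']

lemma exists_preimage (f : η ↪ η') {F : Finset η} {F'' : Finset η'} (h : F'' ⊆ F.map f) :
    ∃ F₀, F₀ ⊆ F ∧ F₀.map f = F'' := by
  classical
  refine ⟨F.filter (fun e => f e ∈ F''), filter_subset _ _, ?_⟩
  apply Subset.antisymm
  · intro x hx
    obtain ⟨e, he, hex⟩ := mem_map.1 hx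
    exact hex ▸ (mem_filter.1 he).2
  · intro x hx
    obtain ⟨e, he, hex⟩ := mem_map.1 (h hx)
    exact mem_map.2 ⟨e, mem_filter.2 ⟨he, hex ▸ hx⟩, hex⟩

end Transfer2
section Book

variable {V : Type*} [DecidableEq V]

/-- The "book" graph on `{u,v} ∪ W`: edge `(u,v)` plus edges `(w,u)`, `(w,v)` for `w ∈ W`. -/
def book (u v : V) (W : Finset V) : Finset (V × V) :=
  insert (u, v) (W.image (fun w => (w, u)) ∪ W.image (fun w => (w, v)))

lemma mem_book {u v : V} {W : Finset V} {e : V × V} :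
    e ∈ book u v W ↔ e = (u, v) ∨ (e.1 ∈ W ∧ (e.2 = u ∨ e.2 = v)) := by
  simp only [book, mem_insert, mem_union, mem_image]
  constructor
  · rintro (h | ⟨w, hw, rfl⟩ | ⟨w, hw, rfl⟩)
    · exact Or.inl h
    · exact Or.inr ⟨hw, Or.inl rfl⟩
    · exact Or.inr ⟨hw, Or.inr rfl⟩
  · rintro (h | ⟨h1, h2 | h2⟩)
    · exact Or.inl h
    · exact Or.inr (Or.inl ⟨e.1, h1, by rw [← h2]⟩)
    · exact Or.inr (Or.inr ⟨e.1, h1, by rw [← h2]⟩)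

lemma card_book {u v : V} {W : Finset V} (huv : u ≠ v) (hu : u ∉ W) :
    (book u v W).card = 2 * W.card + 1 := by
  have hinj1 : Function.Injective (fun w : V => (w, u)) := by
    intro a b h; simpa using h
  have hinj2 : Function.Injective (fun w : V => (w, v)) := by
    intro a b h; simpa using h
  have hdisj : Disjoint (W.image (fun w => (w, u))) (W.image (fun w => (w, v))) := by
    rw [disjoint_left]
    rintro x hx hx'
    obtain ⟨a, -, rfl⟩ := mem_image.1 hx
    obtain ⟨b, -, hb⟩ := mem_image.1 hx'
    simp only [Prod.ext_iff] at hb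
    exact huv hb.2.symm
  have hnotmem : (u, v) ∉ W.image (fun w => (w, u)) ∪ W.image (fun w => (w, v)) := by
    rw [mem_union]
    rintro (h | h)
    · obtain ⟨a, -, ha⟩ := mem_image.1 h
      simp only [Prod.ext_iff] at ha
      exact huv ha.2
    · obtain ⟨a, haW, ha⟩ := mem_image.1 h
      simp only [Prod.ext_iff] at ha
      exact hu (ha.1 ▸ haW)
  rw [book, card_insert_of_notMem hnotmem, card_union_of_disjoint hdisj,
    card_image_of_injective _ hinj1, card_image_of_injective _ hinj2]
  ring

lemma sp_book {u v : V} {W : Finset V} (huv : u ≠ v) (hu : u ∉ W) (hv : v ∉ W) :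
    Sp (Prod.fst : V × V → V) Prod.snd (book u v W) := by
  classical
  intro F' hsub hne
  set X := labVerts (Prod.fst : V × V → V) Prod.snd F' with hX
  have hstruct : ∀ e ∈ F', e = (u, v) ∨ (e.1 ∈ W ∧ (e.2 = u ∨ e.2 = v)) :=
    fun e he => mem_book.1 (hsub he)
  have hfstX : ∀ e ∈ F', e.1 ∈ X := fun e he => head_mem_labVerts he
  have hsndX : ∀ e ∈ F', e.2 ∈ X := fun e he => tail_mem_labVerts he
  have hXeq := card_sdiff_add_card_inter X {u, v}
  have hWnotuv : ∀ w ∈ W, w ∉ ({u, v} : Finset V) := by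
    intro w hw
    simp only [mem_insert, mem_singleton, not_or]
    exact ⟨fun h => hu (h ▸ hw), fun h => hv (h ▸ hw)⟩
  by_cases hcase : (u, v) ∈ F' ∨ ((∃ e ∈ F', e.2 = u) ∧ (∃ e ∈ F', e.2 = v))
  · have huX : u ∈ X ∧ v ∈ X := by
      rcases hcase with h | ⟨⟨e, he, heu⟩, ⟨e', he', hev⟩⟩
      · exact ⟨hfstX _ h, hsndX _ h⟩
      · exact ⟨heu ▸ hsndX _ he, hev ▸ hsndX _ he'⟩
    have hk : (X ∩ {u, v}).card = 2 := by
      have heq : X ∩ {u, v} = {u, v} := by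
        apply Subset.antisymm inter_subset_right
        intro x hx
        rcases mem_insert.1 hx with h | h
        · exact mem_inter.2 ⟨h ▸ huX.1, hx⟩
        · exact mem_inter.2 ⟨(mem_singleton.1 h) ▸ huX.2, hx⟩
      rw [heq, card_pair huv]
    have hFsub : F' ⊆ insert (u, v)
        ((X \ {u, v}).image (fun w => (w, u)) ∪ (X \ {u, v}).image (fun w => (w, v))) := by
      intro e he
      rcases hstruct e he with h | ⟨h1, h2 | h2⟩
      · exact h ▸ mem_insert_self _ _
      · exact mem_insert_of_mem (mem_union_left _ (mem_image.2 ⟨e.1,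
          mem_sdiff.2 ⟨hfstX e he, hWnotuv _ h1⟩, Prod.ext_iff.2 ⟨rfl, h2.symm⟩⟩))
      · exact mem_insert_of_mem (mem_union_right _ (mem_image.2 ⟨e.1,
          mem_sdiff.2 ⟨hfstX e he, hWnotuv _ h1⟩, Prod.ext_iff.2 ⟨rfl, h2.symm⟩⟩))
    have hcard : F'.card ≤ 2 * (X \ {u, v}).card + 1 := by
      have h0 := card_le_card hFsub
      have h1 := card_insert_le (u, v)
        ((X \ {u, v}).image (fun w => (w, u)) ∪ (X \ {u, v}).image (fun w => (w, v)))
      have h2 := card_union_le ((X \ {u, v}).image (fun w => (w, u)))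
        ((X \ {u, v}).image (fun w => (w, v)))
      have h3 := card_image_le (s := X \ {u, v}) (f := fun w => (w, u))
      have h4 := card_image_le (s := X \ {u, v}) (f := fun w => (w, v))
      omega
    omega
  · have huvF' : (u, v) ∉ F' := fun h => hcase (Or.inl h)
    have hall : ¬((∃ e ∈ F', e.2 = u) ∧ (∃ e ∈ F', e.2 = v)) := fun h => hcase (Or.inr h)
    obtain ⟨e₁, he₁⟩ := hne
    have hnotuv : ∀ e ∈ F', e.1 ∈ W ∧ (e.2 = u ∨ e.2 = v) := by
      intro e he
      rcases hstruct e he with h | h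
      · exact absurd (h ▸ he) huvF'
      · exact h
    have key : ∀ y : V, y ∈ ({u, v} : Finset V) → (∀ e ∈ F', e.2 = y) →
        F'.card + 3 ≤ 2 * X.card := by
      intro y hyuv hy
      have hFsub : F' ⊆ (X \ {u, v}).image (fun w => (w, y)) := by
        intro e he
        exact mem_image.2 ⟨e.1, mem_sdiff.2 ⟨hfstX e he, hWnotuv _ (hnotuv e he).1⟩,
          Prod.ext_iff.2 ⟨rfl, (hy e he).symm⟩⟩
      have hm1 : 1 ≤ (X \ {u, v}).card :=
        card_pos.2 ⟨e₁.1, mem_sdiff.2 ⟨hfstX e₁ he₁, hWnotuv _ (hnotuv e₁ he₁).1⟩⟩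
      have hk1 : 1 ≤ (X ∩ {u, v}).card :=
        card_pos.2 ⟨y, mem_inter.2 ⟨(hy e₁ he₁) ▸ hsndX e₁ he₁, hyuv⟩⟩
      have hcard : F'.card ≤ (X \ {u, v}).card :=
        le_trans (card_le_card hFsub) card_image_le
      omega
    rcases (hnotuv e₁ he₁).2 with h | h
    · refine key u (mem_insert_self _ _) ?_
      intro e he
      rcases (hnotuv e he).2 with h2 | h2
      · exact h2
      · exact absurd ⟨⟨e₁, he₁, h⟩, ⟨e, he, h2⟩⟩ hall
    · refine key v (mem_insert_of_mem (mem_singleton_self _)) ?_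
      intro e he
      rcases (hnotuv e he).2 with h2 | h2
      · exact absurd ⟨⟨e, he, h2⟩, ⟨e₁, he₁, h⟩⟩ hall
      · exact h2

end Book
section Interface

variable {V ε Γ : Type*} [DecidableEq V] [DecidableEq ε] [AddCommGroup Γ]
  {head tail : ε → V} {ψ : ε → Γ}

lemma IsBalanced.subset' {E F : Finset ε} (h : IsBalanced head tail ψ E) (hFE : F ⊆ E) :
    IsBalanced head tail ψ F :=
  ⟨h.choose, fun e he => h.choose_spec e (hFE he)⟩

lemma countIndep_empty : CountIndep head tail ψ (∅ : Finset ε) := by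
  constructor <;> intro F' hF' hne <;>
    exact absurd (subset_empty.1 hF') hne.ne_empty <;> intros

lemma Sp_of_CountIndep {E F : Finset ε} (hb : IsBalanced head tail ψ E) (hFE : F ⊆ E)
    (hci : CountIndep head tail ψ F) : Sp head tail F := by
  intro F' hF' hne
  have hbal : IsBalanced head tail ψ F' := hb.subset' ((hF'.trans hFE))
  have h1 := hci.2 F' hF' hne hbal
  have h2 : 1 ≤ F'.card := card_pos.2 hne
  omega

lemma CountIndep_of_Sp {F : Finset ε} (hsp : Sp head tail F) :
    CountIndep head tail ψ F := by
  constructor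
  · intro F' hF' hne
    have := hsp F' hF' hne
    omega
  · intro F' hF' hne _
    have := hsp F' hF' hne
    omega

lemma le_rank2 {E F : Finset ε} (hFE : F ⊆ E) (hF : CountIndep head tail ψ F) :
    F.card ≤ rank2 head tail ψ E := by
  classical
  unfold rank2
  exact Finset.le_sup (f := Finset.card)
    (Finset.mem_filter.2 ⟨Finset.mem_powerset.2 hFE, hF⟩)

lemma rank2_le {E : Finset ε} {n : ℕ}
    (h : ∀ F ⊆ E, CountIndep head tail ψ F → F.card ≤ n) :
    rank2 head tail ψ E ≤ n := by
  classical
  unfold rank2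
  exact Finset.sup_le (fun F hF =>
    h F (mem_powerset.1 (mem_filter.1 hF).1) (mem_filter.1 hF).2)

lemma exists_rank2 (E : Finset ε) :
    ∃ F, F ⊆ E ∧ CountIndep head tail ψ F ∧ F.card = rank2 head tail ψ E := by
  classical
  unfold rank2
  have hne : ((E.powerset).filter (CountIndep head tail ψ)).Nonempty :=
    ⟨∅, mem_filter.2 ⟨mem_powerset.2 (empty_subset E), countIndep_empty⟩⟩
  obtain ⟨F, hF, hsup⟩ := Finset.exists_mem_eq_sup _ hne Finset.card
  exact ⟨F, mem_powerset.1 (mem_filter.1 hF).1, (mem_filter.1 hF).2, hsup.symm⟩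

end Interface

/-- Lemma cl:G_1cupG_2rigid1. If `G₁` and `G₂` are rigid balanced
graphs sharing at least two vertices and `G₁ ∪ G₂` is balanced, then `G₁ ∪ G₂` is rigid:
`r₂(E₁ ∪ E₂) = 2|V₁ ∪ V₂| − 3`. -/
theorem union_rigid_of_rigid_balanced
    {V ε Γ : Type*} [DecidableEq V] [DecidableEq ε] [AddCommGroup Γ]
    (head tail : ε → V) (ψ : ε → Γ) (E₁ E₂ : Finset ε)
    (hbal1 : IsBalanced head tail ψ E₁) (hbal2 : IsBalanced head tail ψ E₂)
    (hbalu : IsBalanced head tail ψ (E₁ ∪ E₂))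
    (hshare : 2 ≤ (labVerts head tail E₁ ∩ labVerts head tail E₂).card)
    (hr1 : rank2 head tail ψ E₁ = 2 * (labVerts head tail E₁).card - 3)
    (hr2 : rank2 head tail ψ E₂ = 2 * (labVerts head tail E₂).card - 3) :
    rank2 head tail ψ (E₁ ∪ E₂) = 2 * (labVerts head tail (E₁ ∪ E₂)).card - 3 := by
  classical
  set V₁ := labVerts head tail E₁ with hV₁
  set V₂ := labVerts head tail E₂ with hV₂
  have hVu : labVerts head tail (E₁ ∪ E₂) = V₁ ∪ V₂ := labVerts_union E₁ E₂
  have h2V1 : 2 ≤ V₁.card := le_trans hshare (card_le_card inter_subset_left)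
  have h2V2 : 2 ≤ V₂.card := le_trans hshare (card_le_card inter_subset_right)
  -- bases of E₁ and E₂
  obtain ⟨F₁, hF₁E, hF₁ci, hF₁card⟩ := exists_rank2 (head := head) (tail := tail) (ψ := ψ) E₁
  obtain ⟨F₂, hF₂E, hF₂ci, hF₂card⟩ := exists_rank2 (head := head) (tail := tail) (ψ := ψ) E₂
  have hF₁sp : Sp head tail F₁ := Sp_of_CountIndep hbal1 hF₁E hF₁ci
  have hF₂sp : Sp head tail F₂ := Sp_of_CountIndep hbal2 hF₂E hF₂ci
  have hF₁c : F₁.card + 3 = 2 * V₁.card := by rw [hF₁card, hr1]; omega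
  have hF₂c : F₂.card + 3 = 2 * V₂.card := by rw [hF₂card, hr2]; omega
  -- extended edge type with all pairs available
  let ι : ε ↪ ε ⊕ (V × V) := ⟨Sum.inl, Sum.inl_injective⟩
  let κ : (V × V) ↪ ε ⊕ (V × V) := ⟨Sum.inr, Sum.inr_injective⟩
  let head' : ε ⊕ (V × V) → V := Sum.elim head Prod.fst
  let tail' : ε ⊕ (V × V) → V := Sum.elim tail Prod.snd
  have hιh : ∀ e, head' (ι e) = head e := fun _ => rfl
  have hιt : ∀ e, tail' (ι e) = tail e := fun _ => rfl
  have hκh : ∀ e, head' (κ e) = Prod.fst e := fun _ => rfl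
  have hκt : ∀ e, tail' (κ e) = Prod.snd e := fun _ => rfl
  set E₁' := E₁.map ι with hE₁'
  set E₂' := E₂.map ι with hE₂'
  have hlvE₁' : labVerts head' tail' E₁' = V₁ := labVerts_map ι hιh hιt E₁
  have hlvE₂' : labVerts head' tail' E₂' = V₂ := labVerts_map ι hιh hιt E₂
  have hF₁'sp : Sp head' tail' (F₁.map ι) := (Sp_map ι hιh hιt).2 hF₁sp
  have hF₂'sp : Sp head' tail' (F₂.map ι) := (Sp_map ι hιh hιt).2 hF₂sp
  -- two shared vertices
  obtain ⟨u, hu, v, hv, huv⟩ := one_lt_card.1 (by omega : 1 < (V₁ ∩ V₂).card)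
  have huV₁ : u ∈ V₁ := (mem_inter.1 hu).1
  have huV₂ : u ∈ V₂ := (mem_inter.1 hu).2
  have hvV₁ : v ∈ V₁ := (mem_inter.1 hv).1
  have hvV₂ : v ∈ V₂ := (mem_inter.1 hv).2
  -- the book graph
  set W := (V₁ ∪ V₂) \ {u, v} with hW
  have huW : u ∉ W := fun h => (mem_sdiff.1 h).2 (mem_insert_self _ _)
  have hvW : v ∉ W := fun h => (mem_sdiff.1 h).2 (mem_insert_of_mem (mem_singleton_self _))
  set B := (book u v W).map κ with hB
  have hBsp : Sp head' tail' B := (Sp_map κ hκh hκt).2 (sp_book huv huW hvW)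
  have hpairsub : ({u, v} : Finset V) ⊆ V₁ ∪ V₂ := by
    intro x hx
    rcases mem_insert.1 hx with h | h
    · exact h ▸ mem_union_left _ huV₁
    · exact (mem_singleton.1 h) ▸ mem_union_left _ hvV₁
  have hWcard : W.card = (V₁ ∪ V₂).card - 2 := by
    rw [hW, card_sdiff_of_subset hpairsub, card_pair huv]
  have h2Vu : 2 ≤ (V₁ ∪ V₂).card := le_trans h2V1 (card_le_card subset_union_left)
  have hBcard : B.card + 3 = 2 * (V₁ ∪ V₂).card := by
    rw [hB, card_map, card_book huv huW]
    omega
  -- each book edge is spanned by a rigid side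
  have hmk : ∀ (A' : Finset (ε ⊕ (V × V))) (VA : Finset V) (FA : Finset (ε ⊕ (V × V))),
      labVerts head' tail' A' = VA → FA ⊆ A' → Sp head' tail' FA →
      FA.card + 3 = 2 * VA.card →
      ∀ p, p ∉ A' → head' p ∈ VA → tail' p ∈ VA →
      ∀ B₀ ⊆ A', Sp head' tail' B₀ →
        (∀ e ∈ A', e ∉ B₀ → ¬ Sp head' tail' (insert e B₀)) →
        ¬ Sp head' tail' (insert p B₀) := by
    intro A' VA FA hlvA hFA hFAsp hFAc p hpA hph hpt B₀ hB₀A hB₀sp hB₀max hins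
    have hB₀ge : FA.card ≤ B₀.card := card_le_of_maximal hB₀sp hB₀A hB₀max FA hFA hFAsp
    have hB₀ne : B₀.Nonempty := card_pos.1 (by omega)
    have hlvB₀ : labVerts head' tail' B₀ ⊆ VA :=
      hlvA ▸ labVerts_mono hB₀A
    have hB₀le : B₀.card + 3 ≤ 2 * VA.card := by
      have := hB₀sp B₀ (Subset.refl _) hB₀ne
      have := card_le_card hlvB₀
      omega
    have hpB₀ : p ∉ B₀ := fun h => hpA (hB₀A h)
    have hle := hins (insert p B₀) (Subset.refl _) (insert_nonempty _ _)
    have hlvins : labVerts head' tail' (insert p B₀) ⊆ VA := by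
      intro x hx
      rcases mem_labVerts_elim hx with ⟨e, he, h' | h'⟩ <;>
        rcases mem_insert.1 he with h'' | h''
      · exact h' ▸ h'' ▸ hph
      · exact h' ▸ hlvB₀ (head_mem_labVerts h'')
      · exact h' ▸ h'' ▸ hpt
      · exact h' ▸ hlvB₀ (tail_mem_labVerts h'')
    have h1 := card_le_card hlvins
    rw [card_insert_of_notMem hpB₀] at hle
    omega
  -- peeling the book edges down into E₁' ∪ E₂'
  have hP : ∀ p ∈ B, p ∉ E₁' ∪ E₂' → ∃ A, A ⊆ E₁' ∪ E₂' ∧ p ∉ A ∧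
      (∀ B₀ ⊆ A, Sp head' tail' B₀ →
        (∀ e ∈ A, e ∉ B₀ → ¬ Sp head' tail' (insert e B₀)) →
        ¬ Sp head' tail' (insert p B₀)) := by
    intro p hpB _
    obtain ⟨q, hq, rfl⟩ := mem_map.1 hpB
    have hnotmem : ∀ (E' : Finset ε), κ q ∉ E'.map ι := by
      intro E' h
      obtain ⟨e, -, he⟩ := mem_map.1 h
      exact Sum.inl_ne_inr he
    have hqh : head' (κ q) = q.1 := rfl
    have hqt : tail' (κ q) = q.2 := rfl
    rcases mem_book.1 hq with h | ⟨h1, h2⟩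
    · -- the edge (u,v): spanned by E₁'
      refine ⟨E₁', subset_union_left, hnotmem E₁, ?_⟩
      exact hmk E₁' V₁ (F₁.map ι) hlvE₁' (map_subset_map.2 hF₁E) hF₁'sp
        (by rw [card_map]; exact hF₁c) (κ q) (hnotmem E₁)
        (by rw [hqh, h]; exact huV₁) (by rw [hqt, h]; exact hvV₁)
    · have hq1 : q.1 ∈ V₁ ∪ V₂ := (mem_sdiff.1 h1).1
      by_cases hq1V₁ : q.1 ∈ V₁
      · refine ⟨E₁', subset_union_left, hnotmem E₁, ?_⟩
        refine hmk E₁' V₁ (F₁.map ι) hlvE₁' (map_subset_map.2 hF₁E) hF₁'sp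
          (by rw [card_map]; exact hF₁c) (κ q) (hnotmem E₁) (hqh ▸ hq1V₁) ?_
        rw [hqt]
        rcases h2 with h | h
        · exact h ▸ huV₁
        · exact h ▸ hvV₁
      · have hq1V₂ : q.1 ∈ V₂ := by
          rcases mem_union.1 hq1 with h | h
          · exact absurd h hq1V₁
          · exact h
        refine ⟨E₂', subset_union_right, hnotmem E₂, ?_⟩
        refine hmk E₂' V₂ (F₂.map ι) hlvE₂' (map_subset_map.2 hF₂E) hF₂'sp
          (by rw [card_map]; exact hF₂c) (κ q) (hnotmem E₂) (hqh ▸ hq1V₂) ?_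
        rw [hqt]
        rcases h2 with h | h
        · exact h ▸ huV₂
        · exact h ▸ hvV₂
  obtain ⟨F', hF'sub, hF'sp, hF'card⟩ :=
    exists_sparse_in_base (E₁' ∪ E₂') B hP B subset_union_right hBsp
  -- F' has exactly the right size
  have hlvE' : labVerts head' tail' (E₁' ∪ E₂') = V₁ ∪ V₂ := by
    rw [labVerts_union, hlvE₁', hlvE₂']
  have hF'ne : F'.Nonempty := by
    apply card_pos.1
    have : 1 ≤ B.card := by omega
    omega
  have hF'le : F'.card + 3 ≤ 2 * (V₁ ∪ V₂).card := by
    have h1 := hF'sp F' (Subset.refl _) hF'ne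
    have h2 : labVerts head' tail' F' ⊆ V₁ ∪ V₂ := hlvE' ▸ labVerts_mono hF'sub
    have := card_le_card h2
    omega
  have hF'c : F'.card + 3 = 2 * (V₁ ∪ V₂).card := by omega
  -- pull back to ε
  have hEmap : E₁' ∪ E₂' = (E₁ ∪ E₂).map ι := by rw [map_union]
  obtain ⟨F₀, hF₀sub, hF₀map⟩ := exists_preimage ι (hEmap ▸ hF'sub)
  have hF₀sp : Sp head tail F₀ := by
    apply (Sp_map ι hιh hιt).1
    rw [hF₀map]
    exact hF'sp
  have hF₀card : F₀.card + 3 = 2 * (V₁ ∪ V₂).card := by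
    rw [← card_map (f := ι), hF₀map]
    exact hF'c
  have hF₀ci : CountIndep head tail ψ F₀ := CountIndep_of_Sp hF₀sp
  -- conclude
  have hge : 2 * (V₁ ∪ V₂).card - 3 ≤ rank2 head tail ψ (E₁ ∪ E₂) := by
    have := le_rank2 hF₀sub hF₀ci
    omega
  have hle : rank2 head tail ψ (E₁ ∪ E₂) ≤ 2 * (V₁ ∪ V₂).card - 3 := by
    apply rank2_le
    intro F hFE hFci
    rcases F.eq_empty_or_nonempty with h | h
    · rw [h]; simp
    · have hbal : IsBalanced head tail ψ F := hbalu.subset' hFE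
      have h1 := hFci.2 F (Subset.refl _) h hbal
      have h2 : labVerts head tail F ⊆ V₁ ∪ V₂ := by
        rw [← hVu]; exact labVerts_mono hFE
      have := card_le_card h2
      omega
  rw [hVu]
  omega
end
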